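/- arXiv:2603.28228 — 7 statements merged into one kernel-verified Lean document; each statement's English description precedes it below -/
import Mathlib

section
/- Let B be a countable group acting on a countable set X and let O ⊆ X be an infinite orbit of this action. Then for any finite subsets F_Z, F_Q ⊆ O there exists b ∈ B such that b·F_Z ∩ F_Q = ∅ and b⁻¹·F_Z ∩ F_Q = ∅. -/
open Pointwise

theorem stmt_5 {B X : Type*} [Group B] [Countable B] [Countable X]
    [MulAction B X] (O : Set X) (x₀ : X) (hO : O = MulAction.orbit B x₀)
    (hOinf : O.Infinite)
    (FZ FQ : Set X) (hFZ : FZ.Finite) (hFQ : FQ.Finite)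
    (hFZO : FZ ⊆ O) (hFQO : FQ ⊆ O) :
    ∃ b : B, ((b • ·) '' FZ) ∩ FQ = ∅ ∧ ((b⁻¹ • ·) '' FZ) ∩ FQ = ∅ := by
  classical
  by_contra hcon
  push_neg at hcon
  -- Index over pairs (a, c); bad b's with b • a = c lie in a coset of stabilizer of a.
  set g : X × X → B := fun p =>
    if h : ∃ b : B, b • p.1 = p.2 then h.choose else 1 with hg
  set s : Finset (X × X) :=
    (hFZ.toFinset ×ˢ hFQ.toFinset) ∪ (hFQ.toFinset ×ˢ hFZ.toFinset) with hs
  have hcovers : ⋃ p ∈ s, (g p) • (MulAction.stabilizer B p.1 : Set B)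
      = Set.univ := by
    ext b
    simp only [Set.mem_iUnion, Set.mem_univ, iff_true]
    rcases Set.eq_empty_or_nonempty (((b • ·) '' FZ) ∩ FQ) with h1 | h1
    case inr =>
      obtain ⟨y, ⟨z, hz, hbz⟩, hy⟩ := h1
      refine ⟨(z, y), ?_, ?_⟩
      · simp [hs, Set.Finite.mem_toFinset, hz, hy]
      · have hex : ∃ b : B, b • z = y := ⟨b, hbz⟩
        have hgz : g (z, y) • z = y := by
          simp only [hg, dif_pos hex]; exact hex.choose_spec
        refine ⟨(g (z, y))⁻¹ * b, ?_, by simp [smul_eq_mul, mul_assoc]⟩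
        simp only [SetLike.mem_coe, MulAction.mem_stabilizer_iff, mul_smul, hbz,
          inv_smul_eq_iff, hgz]
    case inl =>
      obtain ⟨y, ⟨z, hz, hbz⟩, hy⟩ := hcon b h1
      refine ⟨(y, z), ?_, ?_⟩
      · simp [hs, Set.Finite.mem_toFinset, hz, hy]
      · have hex : ∃ b' : B, b' • y = z := ⟨b, by rw [← hbz, smul_inv_smul]⟩
        have hgz : g (y, z) • y = z := by
          simp only [hg, dif_pos hex]; exact hex.choose_spec
        refine ⟨(g (y, z))⁻¹ * b, ?_, by simp [smul_eq_mul, mul_assoc]⟩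
        have hby : b • y = z := by rw [← hbz, smul_inv_smul]
        simp only [SetLike.mem_coe, MulAction.mem_stabilizer_iff, mul_smul, hby,
          inv_smul_eq_iff, hgz]
  obtain ⟨p, hps, hfin⟩ := Subgroup.exists_finiteIndex_of_leftCoset_cover hcovers
  -- p.1 ∈ O, so its orbit is O, infinite, so stabilizer has infinite index.
  have hp1 : p.1 ∈ O := by
    simp only [hs, Finset.mem_union, Finset.mem_product, Set.Finite.mem_toFinset] at hps
    rcases hps with ⟨h, _⟩ | ⟨h, _⟩
    · exact hFZO h
    · exact hFQO h
  have horb : MulAction.orbit B p.1 = O := by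
    rw [hO] at hp1 ⊢
    exact MulAction.orbit_eq_iff.mpr hp1
  have : (MulAction.stabilizer B p.1).index = 0 := by
    rw [MulAction.index_stabilizer, horb, hOinf.ncard]
  exact hfin.index_ne_zero this
end

section
/- Let p be a probability measure on ℕ with infinite support and let (X_n)_{n≥1} be a sequence of i.i.d. random variables with law p. Then there exists a non-decreasing function Φ : ℕ → ℕ such that almost surely the record times (T_k)_{k≥1} are all well defined and T_{k+1} ≤ Φ(R_k) holds for all sufficiently large k. -/
open MeasureTheory ProbabilityTheory Filter

/-- The record value `M_n = max {X_1, …, X_n}` at time `n ≥ 1` of the sequence `X`. -/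
def recordValue {Ω : Type*} (X : ℕ → Ω → ℕ) (n : ℕ) (ω : Ω) : ℕ :=
  (Finset.Icc 1 n).sup fun i => X i ω

/-- The set of record times after time `t`: the times `n > t` with `X_n = M_n`. -/
def recordTimesAfter {Ω : Type*} (X : ℕ → Ω → ℕ) (t : ℕ) (ω : Ω) : Set ℕ :=
  {n : ℕ | t < n ∧ X n ω = recordValue X n ω}

lemma recordValue_mono {Ω : Type*} (X : ℕ → Ω → ℕ) (ω : Ω) {a b : ℕ} (h : a ≤ b) :
    recordValue X a ω ≤ recordValue X b ω :=
  Finset.sup_mono (Finset.Icc_subset_Icc_right h)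

/-- If some value after the current record exceeds the current max, there is a record time
at or before it. -/
lemma rec_next {Ω : Type*} (X : ℕ → Ω → ℕ) (ω : Ω) (t m : ℕ) (hm1 : 1 ≤ m)
    (hgt : recordValue X t ω < X m ω) :
    ∃ n ∈ recordTimesAfter X t ω, n ≤ m := by
  set v := recordValue X t ω with hv
  have hex : ∃ n, 1 ≤ n ∧ v < X n ω := ⟨m, hm1, hgt⟩
  obtain ⟨h1, hvlt⟩ := Nat.find_spec hex
  set n0 := Nat.find hex with hn0
  have hmin : ∀ i, i < n0 → 1 ≤ i → X i ω ≤ v := by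
    intro i hi h1i
    by_contra hc
    exact Nat.find_min hex hi ⟨h1i, by omega⟩
  have ht : t < n0 := by
    by_contra h
    push_neg at h
    have : X n0 ω ≤ v := Finset.le_sup (f := fun i => X i ω) (Finset.mem_Icc.mpr ⟨h1, h⟩)
    omega
  refine ⟨n0, ⟨ht, ?_⟩, Nat.find_min' hex ⟨hm1, hgt⟩⟩
  refine le_antisymm (Finset.le_sup (f := fun i => X i ω) (Finset.mem_Icc.mpr ⟨h1, le_refl _⟩)) ?_
  refine Finset.sup_le ?_
  intro i hi
  rw [Finset.mem_Icc] at hi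
  rcases eq_or_lt_of_le hi.2 with h | h
  · subst h; exact le_refl _
  · exact le_trans (hmin i h hi.1) hvlt.le

theorem stmt_9 {Ω : Type*} [MeasurableSpace Ω] (P : Measure Ω) [IsProbabilityMeasure P]
    (p : ℕ → ℝ) (hp0 : ∀ j, 0 ≤ p j) (hp1 : ∑' j, p j = 1)
    (hpsupp : {j : ℕ | p j ≠ 0}.Infinite)
    (X : ℕ → Ω → ℕ) (hmeas : ∀ n, 1 ≤ n → Measurable (X n))
    -- the variables `X_1, X_2, …` are independent …
    (hindep : iIndepFun
      (fun (i : {i : ℕ // 1 ≤ i}) (ω : Ω) => X i.1 ω) P)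
    -- … and identically distributed with law `p`
    (hlaw : ∀ n, 1 ≤ n → ∀ j : ℕ, P {ω | X n ω = j} = ENNReal.ofReal (p j)) :
    ∃ Φ : ℕ → ℕ, Monotone Φ ∧
      ∀ᵐ ω ∂P, ∃ T : ℕ → ℕ,
        -- the record times `T_1 = 1`, `T_{k+1} = min {n > T_k : X_n = M_n}` are all defined
        T 1 = 1 ∧
        (∀ k, 1 ≤ k → (recordTimesAfter X (T k) ω).Nonempty ∧
          T (k + 1) = sInf (recordTimesAfter X (T k) ω)) ∧
        -- and `T_{k+1} ≤ Φ(R_k)` for all sufficiently large `k`, where `R_k = X_{T_k}`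
        ∃ K : ℕ, ∀ k, K ≤ k → T (k + 1) ≤ Φ (X (T k) ω) := by
  -- summability of p
  have hsumm : Summable p := by
    by_contra h
    rw [tsum_eq_zero_of_not_summable h] at hp1; norm_num at hp1
  -- the CDF
  set F : ℕ → ℝ := fun j => ∑ i ∈ Finset.range (j + 1), p i with hF
  have hF0 : ∀ j, 0 ≤ F j := fun j => Finset.sum_nonneg fun i _ => hp0 i
  have hFlt : ∀ j, F j < 1 := by
    intro j
    obtain ⟨j', hj'mem, hj'⟩ := hpsupp.exists_gt j
    have hmem : j' ∉ Finset.range (j + 1) := by simp; omega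
    have hple : F j + p j' ≤ 1 := by
      rw [← hp1]
      have h2 : F j + p j' = ∑ i ∈ insert j' (Finset.range (j + 1)), p i := by
        rw [Finset.sum_insert hmem, add_comm]
      rw [h2]
      exact Summable.sum_le_tsum _ (fun i _ => hp0 i) hsumm
    have : 0 < p j' := lt_of_le_of_ne (hp0 j') (Ne.symm hj'mem)
    linarith
  -- the function Φ
  have hex : ∀ j, ∃ m, F j ^ m < (1 / 2 : ℝ) ^ j :=
    fun j => exists_pow_lt_of_lt_one (by positivity) (hFlt j)
  set g : ℕ → ℕ := fun j => Nat.find (hex j) with hg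
  set Φ : ℕ → ℕ := fun j => (Finset.range (j + 1)).sup g with hΦ
  have hΦmono : Monotone Φ := fun a b hab =>
    Finset.sup_mono (Finset.range_subset_range.mpr (by omega))
  have hΦpow : ∀ j, F j ^ Φ j < (1 / 2 : ℝ) ^ j := by
    intro j
    have h1 : g j ≤ Φ j := Finset.le_sup (Finset.self_mem_range_succ j)
    calc F j ^ Φ j ≤ F j ^ g j := pow_le_pow_of_le_one (hF0 j) (hFlt j).le h1
    _ < _ := Nat.find_spec (hex j)
  -- the cdf of each X n
  have hcdf : ∀ n, 1 ≤ n → ∀ j, P {ω | X n ω ≤ j} = ENNReal.ofReal (F j) := by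
    intro n hn j
    have hU : {ω | X n ω ≤ j} = ⋃ i ∈ Finset.range (j + 1), {ω | X n ω = i} := by
      ext ω; simp [Nat.lt_succ_iff]
    rw [hU, measure_biUnion_finset ?_ ?_]
    · rw [Finset.sum_congr rfl fun i _ => hlaw n hn i,
        ← ENNReal.ofReal_sum_of_nonneg fun i _ => hp0 i]
    · intro i _ i' _ hne
      simp only [Function.onFun, Set.disjoint_left]
      intro ω h1 h2
      simp only [Set.mem_setOf_eq] at h1 h2
      exact hne (by omega)
    · intro i _
      exact hmeas n hn (measurableSet_singleton i)
  -- the bad events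
  set A : ℕ → Set Ω := fun j => ⋂ n ∈ Finset.Icc 1 (Φ j), {ω | X n ω ≤ j} with hA
  have hAmeasure : ∀ j, P (A j) = ENNReal.ofReal (F j) ^ Φ j := by
    intro j
    set S : Finset {i : ℕ // 1 ≤ i} := (Finset.Icc 1 (Φ j)).subtype fun n => 1 ≤ n with hS
    have key := hindep.measure_inter_preimage_eq_mul S
      (sets := fun _ => Set.Iic j) (fun i _ => measurableSet_Iic)
    have hInter : (⋂ i ∈ S, (fun ω => X i.1 ω) ⁻¹' Set.Iic j) = A j := by
      ext ω
      simp only [Set.mem_iInter, Set.mem_preimage, Set.mem_Iic, hA, Set.mem_setOf_eq,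
        hS, Finset.mem_subtype, Finset.mem_Icc]
      constructor
      · intro h n hn
        exact h ⟨n, hn.1⟩ hn
      · intro h i hi
        exact h i.1 hi
    have hcard : S.card = Φ j := by
      rw [hS, Finset.card_subtype, Finset.filter_true_of_mem (fun x hx => (Finset.mem_Icc.mp hx).1),
        Nat.card_Icc]
      omega
    rw [hInter] at key
    rw [key, Finset.prod_congr rfl (fun i hi => ?_), Finset.prod_const, hcard]
    have h1i : 1 ≤ i.1 := i.2
    have : ((fun ω => X i.1 ω) ⁻¹' Set.Iic j) = {ω | X i.1 ω ≤ j} := rfl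
    rw [this, hcdf i.1 h1i j]
  -- Borel–Cantelli
  have hhalf : ENNReal.ofReal (1 / 2 : ℝ) = (1 / 2 : ENNReal) := by
    rw [ENNReal.ofReal_div_of_pos (by norm_num), ENNReal.ofReal_one, ENNReal.ofReal_ofNat]
  have hsumA : ∑' j, P (A j) ≠ ⊤ := by
    have hle : ∀ j, P (A j) ≤ (1 / 2 : ENNReal) ^ j := by
      intro j
      rw [hAmeasure j, ← ENNReal.ofReal_pow (hF0 j)]
      calc ENNReal.ofReal (F j ^ Φ j) ≤ ENNReal.ofReal ((1 / 2 : ℝ) ^ j) :=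
            ENNReal.ofReal_le_ofReal (hΦpow j).le
        _ = (1 / 2 : ENNReal) ^ j := by rw [ENNReal.ofReal_pow (by norm_num), hhalf]
    have hgeom : ∑' j : ℕ, (1 / 2 : ENNReal) ^ j ≠ ⊤ := by
      rw [ENNReal.tsum_geometric]
      simp [ENNReal.inv_ne_top]
    exact ne_top_of_le_ne_top hgeom (ENNReal.tsum_le_tsum hle)
  have hBC : ∀ᵐ ω ∂P, ∀ᶠ j in atTop, ω ∉ A j := ae_eventually_notMem hsumA
  refine ⟨Φ, hΦmono, ?_⟩
  filter_upwards [hBC] with ω hω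
  obtain ⟨J, hJ⟩ := eventually_atTop.mp hω
  -- good event: for all j ≥ J there is a witness n ≤ Φ j with X n ω > j
  have H : ∀ j, J ≤ j → ∃ n, 1 ≤ n ∧ n ≤ Φ j ∧ j < X n ω := by
    intro j hj
    have h := hJ j hj
    simp only [hA, Set.mem_iInter, Set.mem_setOf_eq, Finset.mem_Icc, not_forall, not_le] at h
    obtain ⟨n, hn, hlt⟩ := h
    exact ⟨n, hn.1, hn.2, hlt⟩
  -- unbounded values
  have Hsup : ∀ v, ∃ n, 1 ≤ n ∧ v < X n ω := by
    intro v
    obtain ⟨n, h1, _, hlt⟩ := H (max v J) (le_max_right _ _)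
    exact ⟨n, h1, lt_of_le_of_lt (le_max_left _ _) hlt⟩
  -- record times sets are all nonempty
  have hne : ∀ t, (recordTimesAfter X t ω).Nonempty := by
    intro t
    obtain ⟨m, hm1, hmv⟩ := Hsup (recordValue X t ω)
    obtain ⟨n, hn, _⟩ := rec_next X ω t m hm1 hmv
    exact ⟨n, hn⟩
  -- the record time sequence (shifted by one)
  set f : ℕ → ℕ := fun k => Nat.rec 1 (fun _ prev => sInf (recordTimesAfter X prev ω)) k with hf
  have hfsucc : ∀ k, f (k + 1) = sInf (recordTimesAfter X (f k) ω) := fun k => rfl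
  have hfmem : ∀ k, f (k + 1) ∈ recordTimesAfter X (f k) ω := by
    intro k; rw [hfsucc]; exact Nat.sInf_mem (hne (f k))
  have hrec : ∀ k, X (f k) ω = recordValue X (f k) ω := by
    intro k
    cases k with
    | zero =>
      show X 1 ω = recordValue X 1 ω
      rw [recordValue, Finset.Icc_self, Finset.sup_singleton]
    | succ k => exact (hfmem k).2
  have hlt' : ∀ k, f k < f (k + 1) := fun k => (hfmem k).1
  have hfmono : Monotone f := monotone_nat_of_le_succ fun k => (hlt' k).le
  have hfge : ∀ k, k + 1 ≤ f k := by
    intro k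
    induction k with
    | zero => exact le_refl 1
    | succ k ih => have := hlt' k; omega
  have hRmono : ∀ a b, a ≤ b → X (f a) ω ≤ X (f b) ω := by
    intro a b hab
    rw [hrec, hrec]
    exact recordValue_mono X ω (hfmono hab)
  -- eventually the record values exceed J
  obtain ⟨m, hm1, hmJ⟩ := Hsup J
  have hRJ : ∀ k, m ≤ k → J ≤ X (f k) ω := by
    intro k hk
    have hmf : m ≤ f k := le_trans (by omega : m ≤ k + 1) (hfge k)
    have : X m ω ≤ recordValue X (f k) ω :=
      Finset.le_sup (f := fun i => X i ω) (Finset.mem_Icc.mpr ⟨hm1, hmf⟩)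
    rw [hrec k]; omega
  -- the key bound
  have hbound : ∀ k, m ≤ k → f (k + 1) ≤ Φ (X (f k) ω) := by
    intro k hk
    obtain ⟨n, hn1, hnΦ, hnlt⟩ := H (X (f k) ω) (hRJ k hk)
    have hgt : recordValue X (f k) ω < X n ω := by rw [← hrec k]; exact hnlt
    obtain ⟨n', hn', hn'le⟩ := rec_next X ω (f k) n hn1 hgt
    rw [hfsucc]
    exact le_trans (Nat.sInf_le hn') (le_trans hn'le hnΦ)
  -- assemble
  refine ⟨fun k => f (k - 1), rfl, fun k hk => ⟨hne _, ?_⟩, m + 1, fun k hk => ?_⟩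
  · show f (k + 1 - 1) = _
    have : k + 1 - 1 = (k - 1) + 1 := by omega
    rw [this, hfsucc]
  · show f (k + 1 - 1) ≤ Φ (X (f (k - 1)) ω)
    have h1 : k + 1 - 1 = (k - 1) + 1 := by omega
    rw [h1]
    exact hbound (k - 1) (by omega)
end

section
/- Let G be a countable group with a normal subgroup N ⊆ G such that N has only countably many amenable subgroups and every subgroup of the quotient G/N is finitely generated. Then G has only countably many amenable subgroups. -/
/-- A group is *amenable* if there is a left-invariant finitely additive
probability measure defined on all of its subsets. -/
def IsAmenable (G : Type*) [Group G] : Prop :=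
  ∃ m : Set G → ℝ,
    (∀ s : Set G, 0 ≤ m s) ∧
    m Set.univ = 1 ∧
    (∀ s t : Set G, Disjoint s t → m (s ∪ t) = m s + m t) ∧
    (∀ (g : G) (s : Set G), m ((g * ·) '' s) = m s)

lemma isAmenable_of_mulEquiv {G H : Type*} [Group G] [Group H] (e : G ≃* H)
    (hG : IsAmenable G) : IsAmenable H := by
  obtain ⟨m, h0, h1, hadd, hinv⟩ := hG
  refine ⟨fun s => m (⇑e ⁻¹' s), fun s => h0 _, by simpa using h1, ?_, ?_⟩
  · intro s t hst
    show m (⇑e ⁻¹' (s ∪ t)) = m (⇑e ⁻¹' s) + m (⇑e ⁻¹' t)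
    rw [Set.preimage_union, hadd _ _ (hst.preimage _)]
  · intro h s
    show m (⇑e ⁻¹' ((h * ·) '' s)) = m (⇑e ⁻¹' s)
    have key : ⇑e ⁻¹' ((h * ·) '' s) = ((e.symm h) * ·) '' (⇑e ⁻¹' s) := by
      ext x
      simp only [Set.mem_preimage, Set.mem_image]
      constructor
      · rintro ⟨y, hy, hyx⟩
        exact ⟨e.symm y, by simpa using hy, by
          have : x = e.symm (h * y) := by rw [hyx]; simp
          simp [this, map_mul]⟩
      · rintro ⟨y, hy, hyx⟩
        exact ⟨e y, hy, by rw [← hyx]; simp [map_mul]⟩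
    rw [key, hinv]

lemma IsAmenable.subgroup {G : Type*} [Group G] (hG : IsAmenable G) (H : Subgroup G) :
    IsAmenable H := by
  obtain ⟨m, h0, h1, hadd, hinv⟩ := hG
  classical
  -- representative of the right coset H g
  let ρ : G → G := fun g => (Quotient.mk (QuotientGroup.rightRel H) g).out
  have hρmem : ∀ g : G, g * (ρ g)⁻¹ ∈ H := by
    intro g
    have : (QuotientGroup.rightRel H) (ρ g) g := Quotient.mk_out g
    exact (QuotientGroup.rightRel_apply).mp this
  have hρ : ∀ (h : H) (g : G), ρ ((h : G) * g) = ρ g := by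
    intro h g
    have : (Quotient.mk (QuotientGroup.rightRel H) ((h : G) * g)) =
        Quotient.mk (QuotientGroup.rightRel H) g := by
      apply Quotient.sound
      refine (QuotientGroup.rightRel_apply).mpr ?_
      simpa using H.inv_mem h.2
    simp only [ρ, this]
  let π : G → H := fun g => ⟨g * (ρ g)⁻¹, hρmem g⟩
  have hπ : ∀ (h : H) (g : G), π ((h : G) * g) = h * π g := by
    intro h g
    ext
    simp [π, hρ h g, mul_assoc]
  refine ⟨fun A => m (π ⁻¹' A), fun A => h0 _, by simpa using h1, ?_, ?_⟩
  · intro s t hst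
    show m (π ⁻¹' (s ∪ t)) = m (π ⁻¹' s) + m (π ⁻¹' t)
    rw [Set.preimage_union, hadd _ _ (hst.preimage _)]
  · intro h A
    show m (π ⁻¹' ((h * ·) '' A)) = m (π ⁻¹' A)
    have key : π ⁻¹' ((h * ·) '' A) = ((h : G) * ·) '' (π ⁻¹' A) := by
      ext g
      simp only [Set.mem_preimage, Set.mem_image]
      constructor
      · rintro ⟨a, ha, hag⟩
        refine ⟨(h : G)⁻¹ * g, ?_, by simp⟩
        have : π ((h : G)⁻¹ * g) = h⁻¹ * π g := by
          simpa using hπ h⁻¹ g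
        rw [this, ← hag]
        simpa using ha
      · rintro ⟨x, hx, hxg⟩
        refine ⟨π x, hx, ?_⟩
        rw [← hxg, hπ]
    rw [key, hinv]

theorem stmt_10 {G : Type*} [Group G] [Countable G]
    (N : Subgroup G) (hN : N.Normal)
    (hNam : {H : Subgroup N | IsAmenable H}.Countable)
    (hQfg : ∀ K : Subgroup (G ⧸ N), K.FG) :
    {H : Subgroup G | IsAmenable H}.Countable := by
  classical
  let f : Subgroup N × Finset G → Subgroup G :=
    fun p => (p.1.map N.subtype) ⊔ Subgroup.closure (↑p.2 : Set G)
  have hcount : (({K : Subgroup N | IsAmenable K} ×ˢ (Set.univ : Set (Finset G))).image f).Countable :=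
    (hNam.prod Set.countable_univ).image f
  refine Set.Countable.mono ?_ hcount
  rintro H (hH : IsAmenable H)
  -- `H ⊓ N`, as a subgroup of `N`, is amenable
  have e1 : ↥((H ⊓ N).subgroupOf H) ≃* ↥(H ⊓ N) :=
    Subgroup.subgroupOfEquivOfLe inf_le_left
  have e2 : ↥((H ⊓ N).subgroupOf N) ≃* ↥(H ⊓ N) :=
    Subgroup.subgroupOfEquivOfLe inf_le_right
  have eqH : (H ⊓ N).subgroupOf H = N.subgroupOf H := by
    ext x; simp [Subgroup.mem_subgroupOf, x.2]
  have eqN : (H ⊓ N).subgroupOf N = H.subgroupOf N := by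
    ext x; simp [Subgroup.mem_subgroupOf, x.2]
  have hHN : IsAmenable (H.subgroupOf N) := by
    have h1 : IsAmenable (N.subgroupOf H) := hH.subgroup _
    rw [← eqH] at h1
    rw [← eqN]
    exact isAmenable_of_mulEquiv e2.symm (isAmenable_of_mulEquiv e1 h1)
  -- finitely generated image in the quotient
  let K : Subgroup (G ⧸ N) := H.map (QuotientGroup.mk' N)
  obtain ⟨S, hS⟩ := hQfg K
  let ℓ : G ⧸ N → G := fun q =>
    if hq : q ∈ K then (Subgroup.mem_map.mp hq).choose else 1
  have hℓ : ∀ q ∈ K, ℓ q ∈ H ∧ QuotientGroup.mk' N (ℓ q) = q := by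
    intro q hq
    simp only [ℓ, dif_pos hq]
    exact ⟨(Subgroup.mem_map.mp hq).choose_spec.1, (Subgroup.mem_map.mp hq).choose_spec.2⟩
  have hSK : (↑S : Set (G ⧸ N)) ⊆ K := hS ▸ Subgroup.subset_closure
  let T : Finset G := S.image ℓ
  have hTH : (↑T : Set G) ⊆ H := by
    intro x hx
    simp only [T, Finset.coe_image, Set.mem_image, Finset.mem_coe] at hx
    obtain ⟨q, hq, rfl⟩ := hx
    exact (hℓ q (hSK hq)).1
  have hclT : Subgroup.closure (↑T : Set G) ≤ H := (Subgroup.closure_le H).mpr hTH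
  refine ⟨(H.subgroupOf N, T), ⟨hHN, trivial⟩, ?_⟩
  -- f (H.subgroupOf N, T) = H
  show (H.subgroupOf N).map N.subtype ⊔ Subgroup.closure (↑T : Set G) = H
  rw [Subgroup.subgroupOf_map_subtype]
  apply le_antisymm
  · exact sup_le inf_le_left hclT
  · intro h hh
    have hq : QuotientGroup.mk' N h ∈ K := Subgroup.mem_map.mpr ⟨h, hh, rfl⟩
    have hsub : K ≤ (Subgroup.closure (↑T : Set G)).map (QuotientGroup.mk' N) := by
      rw [← hS, MonoidHom.map_closure]
      apply Subgroup.closure_mono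
      intro q hq'
      exact ⟨ℓ q, by
        simpa [T] using Finset.mem_image_of_mem ℓ hq', (hℓ q (hSK hq')).2⟩
    obtain ⟨t, ht, htq⟩ := Subgroup.mem_map.mp (hsub hq)
    have htH : t ∈ H := hclT ht
    have hn : h * t⁻¹ ∈ N := by
      have : QuotientGroup.mk' N (h * t⁻¹) = 1 := by
        rw [map_mul, map_inv, htq, mul_inv_cancel]
      rwa [← QuotientGroup.ker_mk' N, MonoidHom.mem_ker]
    have : h = (h * t⁻¹) * t := by group
    rw [this]
    have h1 : h * t⁻¹ ∈ H ⊓ N := Subgroup.mem_inf.mpr ⟨mul_mem hh (inv_mem htH), hn⟩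
    exact mul_mem (Subgroup.mem_sup_left h1) (Subgroup.mem_sup_right ht)
end

section
/- Let m, n ∈ ℤ∖{0} and suppose that m does not divide n and n does not divide m. Then BS(m,n) contains no non-trivial element with roots of arbitrarily large order: for every g ∈ BS(m,n) with g ≠ 1 there exists M ∈ ℕ such that for all integers N > M there is no u ∈ BS(m,n) with u^N = g. -/
/-- The single defining relation `t a^m t⁻¹ a^{-n}` of the Baumslag–Solitar group,
on generators `a = FreeGroup.of 0` and `t = FreeGroup.of 1`. -/
def BSRels (m n : ℤ) : Set (FreeGroup (Fin 2)) :=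
  {FreeGroup.of 1 * FreeGroup.of 0 ^ m * (FreeGroup.of 1)⁻¹ * FreeGroup.of 0 ^ (-n)}

/-- The Baumslag–Solitar group `BS(m,n) = ⟨a, t ∣ t a^m t⁻¹ = a^n⟩`. -/
abbrev BS (m n : ℤ) : Type := PresentedGroup (BSRels m n)

namespace BSAux
open HNNExtension HNNExtension.NormalWord


/-- One "pinch" step on exponents of `a` in `BS(m,n)`. -/
def Step (m n x y : ℤ) : Prop :=
  ∃ k : ℤ, (x = m * k ∧ y = n * k) ∨ (x = n * k ∧ y = m * k)

/-- Valuation of an integer at a natural number. -/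
def val (x : ℤ) (ρ : ℕ) : ℕ := x.natAbs.factorization ρ

theorem val_mul (ρ : ℕ) {x y : ℤ} (hx : x ≠ 0) (hy : y ≠ 0) :
    val (x * y) ρ = val x ρ + val y ρ := by
  unfold val
  rw [Int.natAbs_mul, Nat.factorization_mul (Int.natAbs_ne_zero.2 hx)
    (Int.natAbs_ne_zero.2 hy)]
  rfl

theorem Step.ne_zero {m n x y : ℤ} (hm : m ≠ 0) (hn : n ≠ 0)
    (h : Step m n x y) (hx : x ≠ 0) : y ≠ 0 := by
  obtain ⟨k, (⟨rfl, rfl⟩ | ⟨rfl, rfl⟩)⟩ := h <;>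
    [exact mul_ne_zero hn (fun h => hx (by simp [h]));
     exact mul_ne_zero hm (fun h => hx (by simp [h]))]

theorem Step.weight {m n : ℤ} (hm : m ≠ 0) (hn : n ≠ 0) (a b ρ π : ℕ)
    (hbal : a * val m ρ + b * val m π = a * val n ρ + b * val n π)
    {x y : ℤ} (hx : x ≠ 0) (h : Step m n x y) :
    a * val y ρ + b * val y π = a * val x ρ + b * val x π := by
  obtain ⟨k, (⟨rfl, rfl⟩ | ⟨rfl, rfl⟩)⟩ := h
  · have hk : k ≠ 0 := fun h => hx (by simp [h])
    have ey : a * val (n * k) ρ + b * val (n * k) π =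
        (a * val n ρ + b * val n π) + (a * val k ρ + b * val k π) := by
      rw [val_mul ρ hn hk, val_mul π hn hk]; ring
    have ex : a * val (m * k) ρ + b * val (m * k) π =
        (a * val m ρ + b * val m π) + (a * val k ρ + b * val k π) := by
      rw [val_mul ρ hm hk, val_mul π hm hk]; ring
    rw [ey, ex, hbal]
  · have hk : k ≠ 0 := fun h => hx (by simp [h])
    have ey : a * val (m * k) ρ + b * val (m * k) π =
        (a * val m ρ + b * val m π) + (a * val k ρ + b * val k π) := by
      rw [val_mul ρ hm hk, val_mul π hm hk]; ring
    have ex : a * val (n * k) ρ + b * val (n * k) π =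
        (a * val n ρ + b * val n π) + (a * val k ρ + b * val k π) := by
      rw [val_mul ρ hn hk, val_mul π hn hk]; ring
    rw [ey, ex, hbal]

theorem chain_ne_zero {m n x y : ℤ} (hm : m ≠ 0) (hn : n ≠ 0)
    (h : Relation.ReflTransGen (Step m n) x y) (hx : x ≠ 0) : y ≠ 0 := by
  induction h with
  | refl => exact hx
  | tail _ hstep ih => exact hstep.ne_zero hm hn ih

theorem chain_weight {m n : ℤ} (hm : m ≠ 0) (hn : n ≠ 0) (a b ρ π : ℕ)
    (hbal : a * val m ρ + b * val m π = a * val n ρ + b * val n π)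
    {x y : ℤ} (hx : x ≠ 0) (h : Relation.ReflTransGen (Step m n) x y) :
    a * val y ρ + b * val y π = a * val x ρ + b * val x π := by
  induction h with
  | refl => rfl
  | tail hc hstep ih =>
      rw [Step.weight hm hn a b ρ π hbal (chain_ne_zero hm hn hc hx) hstep, ih]

theorem exists_bad_prime {m n : ℤ} (hm : m ≠ 0) (hn : n ≠ 0) (h : ¬ m ∣ n) :
    ∃ p : ℕ, p.Prime ∧ val n p < val m p := by
  rw [← Int.natAbs_dvd_natAbs, ← Nat.factorization_le_iff_dvd
    (Int.natAbs_ne_zero.2 hm) (Int.natAbs_ne_zero.2 hn), Finsupp.le_def] at h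
  push_neg at h
  obtain ⟨p, hp⟩ := h
  refine ⟨p, ?_, hp⟩
  by_contra hpp
  simp only [Nat.factorization_eq_zero_of_not_prime _ hpp] at hp
  omega

/-- The key numeric bound. -/
theorem root_bound {m n : ℤ} (hm : m ≠ 0) (hn : n ≠ 0)
    {p q : ℕ} (hp : val n p < val m p) (hq : val m q < val n q)
    {r s : ℤ} {N : ℕ} (hN : N ≠ 0) (hr : r ≠ 0)
    (hchain : Relation.ReflTransGen (Step m n) ((N : ℤ) * r) s) :
    (N : ℕ) ∣ s.natAbs * n.natAbs ^ (val s p) * m.natAbs ^ (val s q) := by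
  have hNr : (N : ℤ) * r ≠ 0 := mul_ne_zero (Int.natCast_ne_zero.2 hN) hr
  have hs : s ≠ 0 := chain_ne_zero hm hn hchain hNr
  have hD : s.natAbs * n.natAbs ^ (val s p) * m.natAbs ^ (val s q) ≠ 0 :=
    Nat.mul_ne_zero (Nat.mul_ne_zero (Int.natAbs_ne_zero.2 hs)
      (pow_ne_zero _ (Int.natAbs_ne_zero.2 hn))) (pow_ne_zero _ (Int.natAbs_ne_zero.2 hm))
  rw [← Nat.factorization_le_iff_dvd hN hD, Finsupp.le_def]
  intro ρ
  by_cases hρ : ρ.Prime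
  case neg => simp [Nat.factorization_eq_zero_of_not_prime _ hρ]
  have htar : (s.natAbs * n.natAbs ^ (val s p) * m.natAbs ^ (val s q)).factorization ρ
      = val s ρ + val s p * val n ρ + val s q * val m ρ := by
    rw [Nat.factorization_mul (Nat.mul_ne_zero (Int.natAbs_ne_zero.2 hs)
        (pow_ne_zero _ (Int.natAbs_ne_zero.2 hn))) (pow_ne_zero _ (Int.natAbs_ne_zero.2 hm)),
      Nat.factorization_mul (Int.natAbs_ne_zero.2 hs)
        (pow_ne_zero _ (Int.natAbs_ne_zero.2 hn)),
      Nat.factorization_pow, Nat.factorization_pow]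
    simp [val, mul_comm]
  rw [htar]
  have hvNρ : val ((N : ℤ) * r) ρ = N.factorization ρ + val r ρ := by
    rw [val_mul ρ (Int.natCast_ne_zero.2 hN) hr]; rfl
  rcases le_or_gt (val m ρ) (val n ρ) with hc | hc
  · -- pair with p
    set a := val m p - val n p with ha
    set b := val n ρ - val m ρ with hb
    have ha0 : 0 < a := by omega
    have hba : a * val m ρ + b * val m p = a * val n ρ + b * val n p := by
      have e1 : val n ρ = val m ρ + b := by omega
      have e2 : val m p = val n p + a := by omega
      rw [e1, e2]; ring
    have hw := chain_weight hm hn a b ρ p hba hNr hchain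
    have hvNp : val ((N : ℤ) * r) p = N.factorization p + val r p := by
      rw [val_mul p (Int.natCast_ne_zero.2 hN) hr]; rfl
    rw [hvNρ, hvNp] at hw
    have h1 : a * N.factorization ρ ≤ a * val s ρ + b * val s p := by
      rw [hw]
      calc a * N.factorization ρ
          ≤ a * (N.factorization ρ + val r ρ) :=
            Nat.mul_le_mul_left _ (Nat.le_add_right _ _)
        _ ≤ a * (N.factorization ρ + val r ρ) + b * (N.factorization p + val r p) :=
            Nat.le_add_right _ _
    have h2 : a * val s ρ + b * val s p ≤ a * (val s ρ + val s p * val n ρ) := by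
      rw [mul_add]
      refine Nat.add_le_add_left ?_ _
      calc b * val s p ≤ val n ρ * val s p :=
            Nat.mul_le_mul_right _ (by omega)
        _ = 1 * (val s p * val n ρ) := by ring
        _ ≤ a * (val s p * val n ρ) := Nat.mul_le_mul_right _ ha0
    have h3 := Nat.le_of_mul_le_mul_left (h1.trans h2) ha0
    omega
  · -- pair with q
    set a := val n q - val m q with ha
    set b := val m ρ - val n ρ with hb
    have ha0 : 0 < a := by omega
    have hba : a * val m ρ + b * val m q = a * val n ρ + b * val n q := by
      have e1 : val m ρ = val n ρ + b := by omega
      have e2 : val n q = val m q + a := by omega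
      rw [e1, e2]; ring
    have hw := chain_weight hm hn a b ρ q hba hNr hchain
    have hvNq : val ((N : ℤ) * r) q = N.factorization q + val r q := by
      rw [val_mul q (Int.natCast_ne_zero.2 hN) hr]; rfl
    rw [hvNρ, hvNq] at hw
    have h1 : a * N.factorization ρ ≤ a * val s ρ + b * val s q := by
      rw [hw]
      calc a * N.factorization ρ
          ≤ a * (N.factorization ρ + val r ρ) :=
            Nat.mul_le_mul_left _ (Nat.le_add_right _ _)
        _ ≤ a * (N.factorization ρ + val r ρ) + b * (N.factorization q + val r q) :=
            Nat.le_add_right _ _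
    have h2 : a * val s ρ + b * val s q ≤ a * (val s ρ + val s q * val m ρ) := by
      rw [mul_add]
      refine Nat.add_le_add_left ?_ _
      calc b * val s q ≤ val m ρ * val s q :=
            Nat.mul_le_mul_right _ (by omega)
        _ = 1 * (val s q * val m ρ) := by ring
        _ ≤ a * (val s q * val m ρ) := Nat.mul_le_mul_right _ ha0
    have h3 := Nat.le_of_mul_le_mul_left (h1.trans h2) ha0
    omega


variable {G : Type*} [CommGroup G] {A B : Subgroup G} (φ : A ≃* B)

/-- Product of the list part of a reduced word. -/
def lprod (l : List (ℤˣ × G)) : HNNExtension G A B φ :=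
  (l.map fun x => t ^ (x.1 : ℤ) * of x.2).prod

@[simp] theorem lprod_nil : lprod φ ([] : List (ℤˣ × G)) = 1 := rfl

@[simp] theorem lprod_cons (u : ℤˣ) (g : G) (l : List (ℤˣ × G)) :
    lprod φ ((u, g) :: l) = t ^ (u : ℤ) * of g * lprod φ l := by
  simp [lprod, mul_assoc]

@[simp] theorem lprod_append (l₁ l₂ : List (ℤˣ × G)) :
    lprod φ (l₁ ++ l₂) = lprod φ l₁ * lprod φ l₂ := by
  simp [lprod]

theorem prod_eq (r : ReducedWord G A B) : r.prod φ = of r.head * lprod φ r.toList := rfl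

/-- The compatibility relation of reduced words. -/
abbrev RR (A B : Subgroup G) : (ℤˣ × G) → (ℤˣ × G) → Prop :=
  fun a b => a.2 ∈ toSubgroup A B a.1 → a.1 = b.1

theorem chain_eq (r : ReducedWord G A B) : r.toList.IsChain (RR A B) := r.chain

/-- Making a reduced word from data. -/
def mkRW (h : G) (l : List (ℤˣ × G)) (hc : l.IsChain (RR A B)) : ReducedWord G A B :=
  ⟨h, l, hc⟩

theorem mkRW_prod (h : G) (l : List (ℤˣ × G)) (hc : l.IsChain (RR A B)) :
    (mkRW h l hc).prod φ = of h * lprod φ l := rfl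

theorem t_pow_conj (u : ℤˣ) (x : toSubgroup A B u) :
    (t ^ (u : ℤ) * of (x : G) * (t ^ (u : ℤ))⁻¹ : HNNExtension G A B φ)
      = of (toSubgroupEquiv φ u x : G) := by
  rcases Int.units_eq_one_or u with rfl | rfl
  · simp; exact (equiv_eq_conj (φ := φ) x).symm
  · simp; exact (equiv_symm_eq_conj (φ := φ) x).symm

theorem t_pow_conj' (u : ℤˣ) (x : G) (hx : x ∈ toSubgroup A B u) :
    (t ^ (u : ℤ) * of x : HNNExtension G A B φ)
      = of (toSubgroupEquiv φ u ⟨x, hx⟩ : G) * t ^ (u : ℤ) := by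
  have := t_pow_conj φ u ⟨x, hx⟩
  rw [← this]; group

/-! ### Reversal of words -/

/-- Reversed list of a word `of hd * lprod l`; represents its inverse. -/
def revList : G → List (ℤˣ × G) → List (ℤˣ × G)
  | _, [] => []
  | hd, (u, g) :: l => revList g l ++ [(-u, hd⁻¹)]

/-- The last `G`-component of the word `of hd * lprod l`. -/
def lastG : G → List (ℤˣ × G) → G
  | hd, [] => hd
  | _, (_, g) :: l => lastG g l

@[simp] theorem revList_nil (hd : G) : revList hd [] = [] := rfl

@[simp] theorem revList_cons (hd : G) (u : ℤˣ) (g : G) (l : List (ℤˣ × G)) :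
    revList hd ((u, g) :: l) = revList g l ++ [(-u, hd⁻¹)] := rfl

theorem revList_prod (l : List (ℤˣ × G)) : ∀ hd : G,
    of (lastG hd l)⁻¹ * lprod φ (revList hd l) = (of hd * lprod φ l)⁻¹ := by
  induction l with
  | nil => intro hd; simp [lastG]
  | cons p l ih =>
      obtain ⟨u, g⟩ := p
      intro hd
      rw [revList_cons, lprod_append, lprod_cons, lprod_nil, lprod_cons]
      have hlast : lastG hd ((u, g) :: l) = lastG g l := rfl
      rw [hlast, ← mul_assoc, ih g]
      simp [mul_assoc]

theorem map_fst_revList (l : List (ℤˣ × G)) : ∀ hd : G,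
    (revList hd l).map Prod.fst = ((l.map fun p => -p.1)).reverse := by
  induction l with
  | nil => intro hd; rfl
  | cons p l ih =>
      obtain ⟨u, g⟩ := p
      intro hd
      simp [ih g]

theorem length_revList (l : List (ℤˣ × G)) (hd : G) :
    (revList hd l).length = l.length := by
  have h1 := congrArg List.length (map_fst_revList l hd)
  simpa using h1

theorem head?_fst_revList (l : List (ℤˣ × G)) (hd : G) :
    ((revList hd l).head?).map Prod.fst = (l.getLast?).map (fun p => -p.1) := by
  rw [← List.head?_map, map_fst_revList, List.head?_reverse,
    List.getLast?_map]

theorem units_ne_cases {a b : ℤˣ} (h : a ≠ b) : a = -b := Int.units_ne_iff_eq_neg.1 h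

theorem chain'_revList (l : List (ℤˣ × G)) : ∀ hd : G,
    l.IsChain (RR A B) → (revList hd l).IsChain (RR A B) := by
  induction l with
  | nil => intro hd _; simp
  | cons p l ih =>
      obtain ⟨u, g⟩ := p
      intro hd hc
      rw [revList_cons, List.isChain_append]
      refine ⟨ih g hc.tail, List.isChain_singleton _, ?_⟩
      intro x hx y hy
      simp only [List.head?_cons, Option.mem_def, Option.some.injEq] at hy
      subst hy
      cases l with
      | nil => simp at hx
      | cons p₂ l₂ =>
          obtain ⟨u₂, g₂⟩ := p₂
          rw [revList_cons, List.getLast?_concat] at hx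
          simp only [Option.mem_def, Option.some.injEq] at hx
          subst hx
          intro hmem
          simp only at hmem ⊢
          by_cases huu : u = u₂
          · rw [huu]
          · exfalso
            have hu2 : u₂ = -u := units_ne_cases (fun hh => huu hh.symm)
            have hgg : g ∈ toSubgroup A B u := by
              rw [inv_mem_iff] at hmem
              rwa [hu2, neg_neg] at hmem
            exact huu ((List.isChain_cons_cons.1 hc).1 hgg)

/-! ### Length of elements via normal words -/

variable (G A B) in
/-- A fixed transversal pair. -/
noncomputable def dd : TransversalPair G A B := Classical.arbitrary _

/-- The number of occurrences of `t^{±1}` in the normal form of `g`. -/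
noncomputable def rlen (g : HNNExtension G A B φ) : ℕ :=
  ((NormalWord.equiv φ (dd G A B)) g).toList.length

theorem rlen_def (g : HNNExtension G A B φ) :
    rlen φ g = ((g • (empty : NormalWord (dd G A B))) : NormalWord (dd G A B)).toList.length :=
  rfl

theorem prod_equiv (g : HNNExtension G A B φ) :
    (((NormalWord.equiv φ (dd G A B)) g).toReducedWord).prod φ = g :=
  (NormalWord.equiv φ (dd G A B)).symm_apply_apply g

theorem exists_rw (g : HNNExtension G A B φ) :
    ∃ r : ReducedWord G A B, r.prod φ = g ∧ r.toList.length = rlen φ g :=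
  ⟨((NormalWord.equiv φ (dd G A B)) g).toReducedWord, prod_equiv φ g, rfl⟩

theorem rlen_eq (r : ReducedWord G A B) : rlen φ (r.prod φ) = r.toList.length := by
  have h1 : (((NormalWord.equiv φ (dd G A B)) (r.prod φ)).toReducedWord).prod φ = r.prod φ :=
    prod_equiv φ _
  have h2 := (ReducedWord.map_fst_eq_and_of_prod_eq φ h1).1
  have h3 := congrArg List.length h2
  simpa [rlen] using h3

theorem rlen_of (x : G) : rlen φ (of x) = 0 := by
  have h : (mkRW (A := A) (B := B) x [] List.isChain_nil).prod φ = of x := by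
    rw [mkRW_prod]; simp
  rw [← h, rlen_eq]
  rfl

theorem rlen_one : rlen φ (1 : HNNExtension G A B φ) = 0 := by
  have := rlen_of (A := A) (B := B) φ 1
  simpa using this

theorem unitsSMul_length (u : ℤˣ) (v : NormalWord (dd G A B)) :
    ((unitsSMul φ u v).toList).length ≤ v.toList.length + 1 := by
  rw [unitsSMul]
  split_ifs with h
  · cases v using consRecOn with
    | ofGroup g => simp [Cancels] at h
    | cons g u' w h1 h2 =>
        simp only [unitsSMulWithCancel, consRecOn_cons, group_smul_toList, cons_toList]
        simp
        omega
  · simp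

theorem smul_len_aux (l : List (ℤˣ × G)) : ∀ (hd : G) (v : NormalWord (dd G A B)),
    (((of hd * lprod φ l : HNNExtension G A B φ)) • v).toList.length
      ≤ l.length + v.toList.length := by
  induction l with
  | nil =>
      intro hd v
      simp only [lprod_nil, mul_one, of_smul_eq_smul, group_smul_toList, List.length_nil,
        zero_add]
      exact le_refl _
  | cons p l ih =>
      obtain ⟨u, g⟩ := p
      intro hd v
      have hsplit : (of hd * lprod φ ((u, g) :: l) : HNNExtension G A B φ)
          = of hd * (t ^ (u : ℤ) * (of g * lprod φ l)) := by
        rw [lprod_cons]; group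
      rw [hsplit, mul_smul, mul_smul, of_smul_eq_smul, group_smul_toList,
        t_pow_smul_eq_unitsSMul]
      calc (unitsSMul φ u ((of g * lprod φ l : HNNExtension G A B φ) • v)).toList.length
          ≤ ((of g * lprod φ l : HNNExtension G A B φ) • v).toList.length + 1 :=
            unitsSMul_length φ u _
        _ ≤ (l.length + v.toList.length) + 1 := by
            exact Nat.add_le_add_right (ih g v) 1
        _ = ((u, g) :: l).length + v.toList.length := by
            simp [List.length_cons]; omega

theorem rlen_mul (x y : HNNExtension G A B φ) :
    rlen φ (x * y) ≤ rlen φ x + rlen φ y := by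
  obtain ⟨r, hr, hlen⟩ := exists_rw φ x
  rw [rlen_def, mul_smul, ← hr, prod_eq]
  calc ((of r.head * lprod φ r.toList : HNNExtension G A B φ) •
        (y • (empty : NormalWord (dd G A B)))).toList.length
      ≤ r.toList.length + (y • (empty : NormalWord (dd G A B))).toList.length :=
        smul_len_aux φ r.toList r.head _
    _ = rlen φ (of r.head * lprod φ r.toList) + rlen φ y := by
        rw [← rlen_def, ← prod_eq, rlen_eq]

theorem rlen_conj (c x : HNNExtension G A B φ) :
    rlen φ (c * x * c⁻¹) ≤ rlen φ c + rlen φ x + rlen φ c⁻¹ :=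
  le_trans (rlen_mul φ (c * x) c⁻¹)
    (Nat.add_le_add_right (rlen_mul φ c x) _)

theorem getLast?_app {α : Type*} {l₁ l₂ : List α} (h : l₂ ≠ []) :
    (l₁ ++ l₂).getLast? = l₂.getLast? := by
  obtain ⟨a, ha⟩ := Option.isSome_iff_exists.1 (List.getLast?_isSome.2 h)
  rw [List.getLast?_append, ha]
  rfl

/-! ### Cyclically reduced words -/

/-- A reduced word is cyclically reduced if it is nonempty and there is no pinch
across the junction when the word is repeated. -/
def CRW (r : ReducedWord G A B) : Prop :=
  r.toList ≠ [] ∧ ∀ a ∈ r.toList.getLast?, ∀ b ∈ r.toList.head?,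
    a.2 * r.head ∈ toSubgroup A B a.1 → a.1 = b.1

theorem pow_list (r : ReducedWord G A B) (hcr : CRW r) : ∀ N : ℕ,
    ∃ (L : List (ℤˣ × G)) (_ : L.IsChain (RR A B)),
      of r.head * lprod φ L = (r.prod φ) ^ (N + 1) ∧
      L.length = (N + 1) * r.toList.length ∧
      L.head?.map Prod.fst = r.toList.head?.map Prod.fst ∧
      L.getLast? = r.toList.getLast? := by
  intro N
  induction N with
  | zero => exact ⟨r.toList, r.chain, by rw [pow_one, prod_eq], by simp, rfl, rfl⟩
  | succ N ih =>
      obtain ⟨L, hcL, hprod, hlen, hhead, hlast⟩ := ih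
      obtain hnil | ⟨l₀, ⟨uk, gk⟩, hrl⟩ := List.eq_nil_or_concat r.toList
      · exact absurd hnil hcr.1
      rw [List.concat_eq_append] at hrl
      have hLne : L ≠ [] := by
        intro hL
        rw [hL] at hlen
        simp only [List.length_nil] at hlen
        have h2 : (N + 1) * r.toList.length ≠ 0 :=
          Nat.mul_ne_zero (Nat.succ_ne_zero N)
            (fun h => hcr.1 (List.length_eq_zero_iff.1 h))
        exact h2 hlen.symm
      have hlast_r : r.toList.getLast? = some (uk, gk) := by rw [hrl, List.getLast?_concat]
      -- the modified copy of the list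
      refine ⟨(l₀ ++ [(uk, gk * r.head)]) ++ L, ?_, ?_, ?_, ?_, ?_⟩
      · -- chain condition
        rw [List.isChain_append]
        refine ⟨?_, hcL, ?_⟩
        · have hc := r.chain
          rw [hrl, List.isChain_append] at hc
          rw [List.isChain_append]
          exact ⟨hc.1, List.isChain_singleton _, fun x hx y hy => by
            simp only [List.head?_cons, Option.mem_def, Option.some.injEq] at hy
            subst hy
            exact hc.2.2 x hx (uk, gk) rfl⟩
        · intro x hx y hy
          rw [List.getLast?_concat] at hx
          simp only [Option.mem_def, Option.some.injEq] at hx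
          subst hx
          intro hmem
          -- use the CR hypothesis
          obtain ⟨b₀, hb₀⟩ : ∃ b₀, r.toList.head? = some b₀ := by
            cases hL : r.toList with
            | nil => exact absurd hL hcr.1
            | cons b tl => exact ⟨b, rfl⟩
          have h1 := hcr.2 (uk, gk) hlast_r b₀ hb₀ hmem
          have h2 : y.1 = b₀.1 := by
            rw [hb₀] at hhead
            rw [hy] at hhead
            simpa using hhead
          simpa [h2] using h1
      · -- product
        rw [lprod_append, lprod_append, lprod_cons, lprod_nil, mul_one]
        have h1 : (of (gk * r.head) : HNNExtension G A B φ) = of gk * of r.head := by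
          rw [map_mul]
        have h2 : (r.prod φ) ^ (N + 1 + 1) = (r.prod φ) * (r.prod φ) ^ (N + 1) :=
          pow_succ' _ _
        rw [h1, h2, ← hprod, prod_eq, hrl, lprod_append, lprod_cons, lprod_nil, mul_one]
        group
      · -- length
        have h1 : r.toList.length = l₀.length + 1 := by rw [hrl]; simp
        rw [List.length_append, List.length_append, hlen, h1]
        simp only [List.length_singleton]
        ring
      · -- head
        rw [hrl]
        cases l₀ with
        | nil => simp
        | cons p l₀' => simp
      · -- last
        rw [getLast?_app hLne, hlast]

theorem rlen_pow (r : ReducedWord G A B) (hcr : CRW r) (N : ℕ) :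
    rlen φ ((r.prod φ) ^ (N + 1)) = (N + 1) * r.toList.length := by
  obtain ⟨L, hcL, hprod, hlen, _, _⟩ := pow_list φ r hcr N
  rw [← hprod, ← mkRW_prod φ r.head L hcL, rlen_eq]
  exact hlen

/-! ### Conjugates of base elements -/

@[simp] theorem lastG_cons (hd : G) (u : ℤˣ) (g : G) (l : List (ℤˣ × G)) :
    lastG hd ((u, g) :: l) = lastG g l := rfl

theorem lastG_eq (l : List (ℤˣ × G)) : ∀ (hd : G) (p : ℤˣ × G),
    l.getLast? = some p → lastG hd l = p.2 := by
  induction l with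
  | nil => intro hd p h; simp at h
  | cons q l ih =>
      obtain ⟨uq, gq⟩ := q
      intro hd p h
      cases l with
      | nil =>
          simp only [List.getLast?_singleton, Option.some.injEq] at h
          rw [← h]
          rfl
      | cons q₂ l₂ =>
          rw [List.getLast?_cons_cons] at h
          rw [lastG_cons]
          exact ih gq p h

/-- A single pinch step on base elements. -/
def PStep (x y : G) : Prop :=
  ∃ (u : ℤˣ) (h : x ∈ toSubgroup A B u), y = (toSubgroupEquiv φ u ⟨x, h⟩ : G)

theorem conj_chain_aux (l : List (ℤˣ × G)) : l.IsChain (RR A B) → ∀ (hd x y : G),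
    (of hd * lprod φ l) * of x * (of hd * lprod φ l)⁻¹ = of y →
    Relation.ReflTransGen (PStep φ) x y := by
  induction l using List.reverseRecOn with
  | nil =>
      intro _ hd x y hE
      simp only [lprod_nil, mul_one] at hE
      have : of (hd * x * hd⁻¹) = (of y : HNNExtension G A B φ) := by
        rw [map_mul, map_mul, map_inv]; exact hE
      have hxy : hd * x * hd⁻¹ = y := HNNExtension.of_injective φ this
      have : x = y := by rw [← hxy, mul_comm hd x, mul_inv_cancel_right]
      rw [this]
  | append_singleton l p ih =>
      obtain ⟨u, gk⟩ := p
      intro hc hd x y hE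
      have hc₀ : l.IsChain (RR A B) := (List.isChain_append.1 hc).1
      have hjunc := (List.isChain_append.1 hc).2.2
      have hgx : of gk * of x * (of gk)⁻¹ = (of x : HNNExtension G A B φ) := by
        rw [← map_inv, ← map_mul, ← map_mul, mul_comm gk x, mul_inv_cancel_right]
      have key : (of hd * lprod φ (l ++ [(u, gk)])) * of x *
            (of hd * lprod φ (l ++ [(u, gk)]))⁻¹
          = (of hd * lprod φ l) * (t ^ (u : ℤ) * of x * (t ^ (u : ℤ))⁻¹) *
            (of hd * lprod φ l)⁻¹ := by
        rw [lprod_append, lprod_cons, lprod_nil, mul_one]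
        have h1 : (t ^ (u : ℤ) * of gk : HNNExtension G A B φ) * of x *
            (t ^ (u : ℤ) * of gk)⁻¹ = t ^ (u : ℤ) * of x * (t ^ (u : ℤ))⁻¹ := by
          have h2 : (t ^ (u : ℤ) * of gk : HNNExtension G A B φ) * of x *
              (t ^ (u : ℤ) * of gk)⁻¹
              = t ^ (u : ℤ) * (of gk * of x * (of gk)⁻¹) * (t ^ (u : ℤ))⁻¹ := by
            group
          rw [h2, hgx]
        calc (of hd * (lprod φ l * (t ^ (u : ℤ) * of gk))) * of x *
              (of hd * (lprod φ l * (t ^ (u : ℤ) * of gk)))⁻¹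
            = (of hd * lprod φ l) * ((t ^ (u : ℤ) * of gk) * of x *
                (t ^ (u : ℤ) * of gk)⁻¹) * (of hd * lprod φ l)⁻¹ := by group
          _ = (of hd * lprod φ l) * (t ^ (u : ℤ) * of x * (t ^ (u : ℤ))⁻¹) *
                (of hd * lprod φ l)⁻¹ := by rw [h1]
      rw [key] at hE
      by_cases hx : x ∈ toSubgroup A B u
      · have hz := t_pow_conj φ u ⟨x, hx⟩
        rw [hz] at hE
        exact Relation.ReflTransGen.head ⟨u, hx, rfl⟩ (ih hc₀ hd _ y hE)
      · exfalso
        -- build a reduced word contradicting Britton's lemma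
        set LW := (l ++ [(u, x), (-u, (lastG hd l)⁻¹)]) ++ revList hd l with hLW
        have hchainW : LW.IsChain (RR A B) := by
          rw [hLW, List.isChain_append]
          refine ⟨?_, chain'_revList l hd hc₀, ?_⟩
          · -- chain of l ++ [(u,x),(-u,..)]
            rw [List.isChain_append]
            refine ⟨hc₀, ?_, ?_⟩
            · refine List.isChain_cons_cons.2 ⟨?_, List.isChain_singleton _⟩
              intro hmem
              exact absurd hmem hx
            · intro a ha y' hy'
              simp only [List.head?_cons, Option.mem_def, Option.some.injEq] at hy'
              subst hy'
              exact hjunc a ha (u, gk) rfl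
          · -- junction with the reversed word
            intro a ha y' hy'
            have ha' : a = (-u, (lastG hd l)⁻¹) := by
              rw [getLast?_app (by simp)] at ha
              exact (by simpa using ha : _ = a).symm
            subst ha'
            intro hmem
            -- y' is the head of revList hd l
            cases l with
            | nil => simp at hy'
            | cons p₁ l₁ =>
                obtain ⟨plast, hplast⟩ : ∃ p, (p₁ :: l₁).getLast? = some p :=
                  Option.isSome_iff_exists.1 (List.getLast?_isSome.2 (by simp))
                have hy'fst : y'.1 = -plast.1 := by
                  have := head?_fst_revList (p₁ :: l₁) hd
                  rw [hplast, hy'] at this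
                  simpa using this
                have hlastG : lastG hd (p₁ :: l₁) = plast.2 :=
                  lastG_eq (p₁ :: l₁) hd plast hplast
                rw [hy'fst]
                simp only [hlastG] at hmem
                have hj := hjunc plast hplast (u, gk) rfl
                by_cases huu : u = plast.1
                · rw [huu]
                · exfalso
                  have : plast.1 = -u := units_ne_cases (fun hh => huu hh.symm)
                  have hpm : plast.2 ∈ toSubgroup A B plast.1 := by
                    rw [this]
                    exact inv_mem_iff.1 hmem
                  exact huu (hj hpm).symm
        have hprodW : (mkRW hd LW hchainW).prod φ = of y := by
          have hrev := revList_prod φ l hd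
          have hneg : (t : HNNExtension G A B φ) ^ ((-u : ℤˣ) : ℤ) = (t ^ (u : ℤ))⁻¹ := by
            rw [Units.val_neg, zpow_neg]
          rw [mkRW_prod, hLW, lprod_append, lprod_append, lprod_cons, lprod_cons,
            lprod_nil, mul_one, hneg, ← hE, ← hrev]
          group
        have h9 : LW = [] := ReducedWord.toList_eq_nil_of_mem_of_range φ
          (mkRW hd LW hchainW) ⟨y, hprodW.symm⟩
        rw [hLW] at h9
        simp at h9

/-! ### Conjugation into standard form -/

theorem exists_conj_form (g : HNNExtension G A B φ) :
    ∃ (c : HNNExtension G A B φ) (r : ReducedWord G A B),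
      g = c * r.prod φ * c⁻¹ ∧ (r.toList = [] ∨ CRW r) := by
  obtain ⟨r₀, hr₀, -⟩ := exists_rw φ g
  suffices h : ∀ (k : ℕ) (r : ReducedWord G A B), r.toList.length ≤ k →
      ∃ c r', r.prod φ = c * r'.prod φ * c⁻¹ ∧ (r'.toList = [] ∨ CRW r') by
    obtain ⟨c, r', h1, h2⟩ := h r₀.toList.length r₀ le_rfl
    exact ⟨c, r', by rw [← hr₀, h1], h2⟩
  intro k
  induction k with
  | zero =>
      intro r hr
      exact ⟨1, r, by simp, Or.inl (List.length_eq_zero_iff.1 (Nat.le_zero.1 hr))⟩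
  | succ k ih =>
      intro r hr
      by_cases hnil : r.toList = []
      · exact ⟨1, r, by simp, Or.inl hnil⟩
      by_cases hcr : CRW r
      · exact ⟨1, r, by simp, Or.inr hcr⟩
      unfold CRW at hcr
      push_neg at hcr
      obtain ⟨a, ha, b, hb, hmem, hne⟩ := hcr hnil
      cases hL : r.toList with
      | nil => exact absurd hL hnil
      | cons b₁ l₁ =>
          obtain ⟨u₁, g₁⟩ := b₁
          have hb' : b = (u₁, g₁) := by
            rw [hL] at hb
            exact (by simpa using hb : _ = b).symm
          rcases List.eq_nil_or_concat l₁ with hl₁ | ⟨l₀, pk, hl₀⟩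
          · -- length-one lists are always cyclically reduced
            exfalso
            subst hl₁
            have ha' : a = (u₁, g₁) := by
              rw [hL] at ha
              exact (by simpa using ha : _ = a).symm
            rw [ha', hb'] at hne
            exact hne rfl
          · obtain ⟨uk, gk⟩ := pk
            rw [List.concat_eq_append] at hl₀
            have hL' : r.toList = ((u₁, g₁) :: l₀) ++ [(uk, gk)] := by
              rw [hL, hl₀]
              rfl
            have ha' : a = (uk, gk) := by
              rw [hL', List.getLast?_concat] at ha
              exact (by simpa using ha : _ = a).symm
            subst ha'
            subst hb'
            have hne' : uk ≠ u₁ := hne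
            have hu₁ : u₁ = -uk := by
              have h := units_ne_cases hne'
              rw [h, neg_neg]
            set h := r.head with hhd
            set z := (toSubgroupEquiv φ uk ⟨gk * h, hmem⟩ : G) with hz
            set c₁ : HNNExtension G A B φ := of h * t ^ (u₁ : ℤ) * of g₁ with hc₁
            set Q : HNNExtension G A B φ := lprod φ l₀ * of (z * g₁) with hQ
            have hu : ((t : HNNExtension G A B φ) ^ (u₁ : ℤ))⁻¹ = t ^ (uk : ℤ) := by
              rw [hu₁, Units.val_neg, zpow_neg, inv_inv]
            have e2 : (t : HNNExtension G A B φ) ^ (uk : ℤ) * of (gk * h)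
                = of z * t ^ (uk : ℤ) := t_pow_conj' φ uk (gk * h) hmem
            have hg' : c₁ * Q * c₁⁻¹ = r.prod φ := by
              calc c₁ * Q * c₁⁻¹
                  = of h * t ^ (u₁ : ℤ) * of g₁ * lprod φ l₀ *
                    (of (z * g₁) * (of g₁)⁻¹ * ((t ^ (u₁ : ℤ))⁻¹)) * (of h)⁻¹ := by
                    rw [hc₁, hQ]; group
                _ = of h * t ^ (u₁ : ℤ) * of g₁ * lprod φ l₀ *
                    (of z * t ^ (uk : ℤ)) * (of h)⁻¹ := by
                    rw [map_mul, mul_inv_cancel_right, hu]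
                _ = of h * t ^ (u₁ : ℤ) * of g₁ * lprod φ l₀ *
                    (t ^ (uk : ℤ) * (of gk * of h)) * (of h)⁻¹ := by
                    rw [← e2, map_mul]
                _ = r.prod φ := by
                    rw [prod_eq, hL', lprod_append, lprod_cons, lprod_cons, lprod_nil,
                      ← hhd]
                    group
            -- now build the shorter word for Q
            have hchl₀ : l₀.IsChain (RR A B) := by
              have hc := r.chain
              rw [hL'] at hc
              exact (List.isChain_append.1 (hc.tail)).1
            have hlen₀ : l₀.length ≤ k := by
              have : r.toList.length = l₀.length + 2 := by rw [hL']; simp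
              omega
            obtain ⟨r'', hQ', hlen''⟩ :
                ∃ r'' : ReducedWord G A B, r''.prod φ = Q ∧ r''.toList.length ≤ k := by
              rcases List.eq_nil_or_concat l₀ with hl₀n | ⟨l₀', pj, hl₀'⟩
              · refine ⟨mkRW (z * g₁) [] List.isChain_nil, ?_, Nat.zero_le k⟩
                rw [mkRW_prod, hQ, hl₀n]
                simp
              · obtain ⟨uj, gj⟩ := pj
                rw [List.concat_eq_append] at hl₀'
                have hch' : (l₀' ++ [(uj, gj * (z * g₁))]).IsChain (RR A B) := by
                  have hc0 := hchl₀
                  rw [hl₀', List.isChain_append] at hc0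
                  rw [List.isChain_append]
                  exact ⟨hc0.1, List.isChain_singleton _, fun x hx y hy => by
                    simp only [List.head?_cons, Option.mem_def, Option.some.injEq] at hy
                    subst hy
                    exact hc0.2.2 x hx (uj, gj) rfl⟩
                refine ⟨mkRW 1 (l₀' ++ [(uj, gj * (z * g₁))]) hch', ?_, ?_⟩
                · rw [mkRW_prod, hQ, hl₀', lprod_append, lprod_append, lprod_cons,
                    lprod_cons, lprod_nil, map_mul, map_one]
                  group
                · have : l₀.length = l₀'.length + 1 := by rw [hl₀']; simp
                  simp only [mkRW, List.length_append, List.length_singleton]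
                  omega
            obtain ⟨c', r', hih, hprop⟩ := ih r'' hlen''
            refine ⟨c₁ * c', r', ?_, hprop⟩
            rw [← hg', ← hQ', hih]
            group

/-! ### Bounding roots -/

theorem rlen_conj_of (e : HNNExtension G A B φ) (x : G) :
    rlen φ (e * of x * e⁻¹) ≤ rlen φ e + rlen φ e⁻¹ := by
  have h1 := rlen_conj φ e (of x)
  rw [rlen_of] at h1
  omega

/-- A positive power of a cyclically reduced word is never conjugate to a base
element. -/
theorem cr_not_conj_of (r : ReducedWord G A B) (hcr : CRW r) (e : HNNExtension G A B φ)
    (x : G) (N : ℕ) (hN : 0 < N) :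
    (r.prod φ) ^ N ≠ e * of x * e⁻¹ := by
  intro hE
  have hk : 1 ≤ r.toList.length :=
    Nat.pos_of_ne_zero (fun h => hcr.1 (List.length_eq_zero_iff.1 h))
  set C := rlen φ e + rlen φ e⁻¹ with hC
  have key : ∀ j : ℕ, j + 1 ≤ C := by
    intro j
    have hpos : 0 < N * (j + 1) := Nat.mul_pos hN (Nat.succ_pos j)
    obtain ⟨mm, hmm⟩ : ∃ mm, N * (j + 1) = mm + 1 := ⟨N * (j + 1) - 1, by omega⟩
    have e1 : (r.prod φ) ^ (N * (j + 1)) = e * of (x ^ (j + 1)) * e⁻¹ := by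
      rw [pow_mul, hE, conj_pow, map_pow]
    have e2 : j + 1 ≤ rlen φ ((r.prod φ) ^ (N * (j + 1))) := by
      rw [hmm, rlen_pow φ r hcr mm]
      have h3 : j + 1 ≤ N * (j + 1) := Nat.le_mul_of_pos_left _ hN
      have h4 : mm + 1 ≤ (mm + 1) * r.toList.length := Nat.le_mul_of_pos_right _ hk
      omega
    have e3 : rlen φ ((r.prod φ) ^ (N * (j + 1))) ≤ C := by
      rw [e1]
      exact rlen_conj_of φ e _
    omega
  have := key C
  omega

/-- If a cyclically reduced word `r'` has an `N`-th power conjugate to the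
cyclically reduced word `r`, then `N` is at most the length of `r`. -/
theorem cr_cr_bound (r' r : ReducedWord G A B) (hcr' : CRW r') (hcr : CRW r)
    (e : HNNExtension G A B φ) (N : ℕ) (hN : r.toList.length < N) :
    (r'.prod φ) ^ N ≠ e * (r.prod φ) * e⁻¹ := by
  intro hE
  have hNpos : 0 < N := by omega
  have hk'1 : 1 ≤ r'.toList.length :=
    Nat.pos_of_ne_zero (fun h => hcr'.1 (List.length_eq_zero_iff.1 h))
  set C := rlen φ e + rlen φ e⁻¹ with hC
  have key : ∀ j : ℕ, j + 1 ≤ C := by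
    intro j
    have hpos : 0 < N * (j + 1) := Nat.mul_pos hNpos (Nat.succ_pos j)
    obtain ⟨mm, hmm⟩ : ∃ mm, N * (j + 1) = mm + 1 := ⟨N * (j + 1) - 1, by omega⟩
    have e1 : (r'.prod φ) ^ (N * (j + 1)) = e * (r.prod φ) ^ (j + 1) * e⁻¹ := by
      rw [pow_mul, hE, conj_pow]
    have e2 : (j + 1) * r.toList.length + (j + 1)
        ≤ rlen φ ((r'.prod φ) ^ (N * (j + 1))) := by
      rw [hmm, rlen_pow φ r' hcr' mm]
      have h3 : (j + 1) * (r.toList.length + 1) ≤ (j + 1) * N :=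
        Nat.mul_le_mul_left _ (by omega)
      have h4 : (j + 1) * N ≤ ((j + 1) * N) * r'.toList.length :=
        Nat.le_mul_of_pos_right _ hk'1
      have h5 : ((j + 1) * N) * r'.toList.length = (mm + 1) * r'.toList.length := by
        rw [← hmm]; ring
      have h6 : (j + 1) * (r.toList.length + 1)
          = (j + 1) * r.toList.length + (j + 1) := by ring
      omega
    have e3 : rlen φ ((r'.prod φ) ^ (N * (j + 1))) ≤ C + (j + 1) * r.toList.length := by
      rw [e1]
      have h7 := rlen_conj φ e ((r.prod φ) ^ (j + 1))
      rw [rlen_pow φ r hcr j] at h7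
      omega
    omega
  have := key C
  omega

/-- The central dichotomy: either `g` visibly has no large roots, or `g` is
conjugate to a base element and each root yields a pinch chain. -/
theorem roots_dichotomy (g : HNNExtension G A B φ) (hg : g ≠ 1) :
    (∃ M : ℕ, ∀ N : ℕ, M < N → ¬ ∃ u : HNNExtension G A B φ, u ^ N = g) ∨
    (∃ x₀ : G, x₀ ≠ 1 ∧ ∀ N : ℕ, 0 < N → ∀ u : HNNExtension G A B φ, u ^ N = g →
      ∃ x₁ : G, x₁ ≠ 1 ∧ Relation.ReflTransGen (PStep φ) (x₁ ^ N) x₀) := by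
  obtain ⟨c, r, hgr, hcase | hcase⟩ := exists_conj_form φ g
  · -- `g` is conjugate to a base element
    right
    have hg0 : g = c * of r.head * c⁻¹ := by
      rw [hgr, prod_eq, hcase, lprod_nil, mul_one]
    refine ⟨r.head, ?_, ?_⟩
    · intro h1
      apply hg
      rw [hg0, h1]
      simp
    · intro N hN u hu
      obtain ⟨d, r', hur, hcase' | hcase'⟩ := exists_conj_form φ u
      · -- root is elliptic as well
        have hu0 : u = d * of r'.head * d⁻¹ := by
          rw [hur, prod_eq, hcase', lprod_nil, mul_one]
        refine ⟨r'.head, ?_, ?_⟩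
        · intro h1
          apply hg
          rw [← hu, hu0, h1]
          simp
        · have h4 : d * of (r'.head ^ N) * d⁻¹ = c * of r.head * c⁻¹ := by
            rw [map_pow, ← conj_pow, ← hu0, hu, hg0]
          have hE : (c⁻¹ * d) * of (r'.head ^ N) * (c⁻¹ * d)⁻¹ = of r.head := by
            have h5 : (c⁻¹ * d) * of (r'.head ^ N) * (c⁻¹ * d)⁻¹
                = c⁻¹ * (d * of (r'.head ^ N) * d⁻¹) * c := by group
            rw [h5, h4]
            group
          obtain ⟨w, hw, -⟩ := exists_rw φ (c⁻¹ * d)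
          rw [← hw, prod_eq] at hE
          exact conj_chain_aux φ w.toList w.chain w.head _ _ hE
      · -- root is hyperbolic: impossible
        exfalso
        have hu0 : u = d * r'.prod φ * d⁻¹ := hur
        have hP : (r'.prod φ) ^ N = (d⁻¹ * c) * of r.head * (d⁻¹ * c)⁻¹ := by
          have h4 : d * (r'.prod φ) ^ N * d⁻¹ = c * of r.head * c⁻¹ := by
            rw [← conj_pow, ← hu0, hu, hg0]
          have h5 : (r'.prod φ) ^ N = d⁻¹ * (d * (r'.prod φ) ^ N * d⁻¹) * d := by group
          rw [h5, h4]
          group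
        exact cr_not_conj_of φ r' hcase' _ _ N hN hP
  · -- `g` is conjugate to a cyclically reduced word
    left
    refine ⟨r.toList.length, ?_⟩
    rintro N hNlen ⟨u, hu⟩
    have hNpos : 0 < N := by omega
    obtain ⟨d, r', hur, hcase' | hcase'⟩ := exists_conj_form φ u
    · -- root elliptic: impossible
      have hu0 : u = d * of r'.head * d⁻¹ := by
        rw [hur, prod_eq, hcase', lprod_nil, mul_one]
      have hP : (r.prod φ) ^ 1 = (c⁻¹ * d) * of (r'.head ^ N) * (c⁻¹ * d)⁻¹ := by
        have h4 : d * of (r'.head ^ N) * d⁻¹ = c * r.prod φ * c⁻¹ := by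
          rw [map_pow, ← conj_pow, ← hu0, hu, hgr]
        have h5 : (r.prod φ) ^ 1 = c⁻¹ * (c * r.prod φ * c⁻¹) * c := by group
        rw [h5, ← h4]
        group
      exact cr_not_conj_of φ r hcase _ _ 1 one_pos hP
    · -- both cyclically reduced: contradicts `N` large
      have hP : (r'.prod φ) ^ N = (d⁻¹ * c) * (r.prod φ) * (d⁻¹ * c)⁻¹ := by
        have h4 : d * (r'.prod φ) ^ N * d⁻¹ = c * r.prod φ * c⁻¹ := by
          rw [← conj_pow, ← hur, hu, hgr]
        have h5 : (r'.prod φ) ^ N = d⁻¹ * (d * (r'.prod φ) ^ N * d⁻¹) * d := by group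
        rw [h5, h4]
        group
      exact cr_cr_bound φ r' r hcase' hcase _ N hNlen hP


/-! ### Specialization to the Baumslag-Solitar groups -/

section BSSpec
open Multiplicative

/-- Multiplication by `m` as an endomorphism of `Multiplicative ℤ`. -/
def Tm (m : ℤ) : Multiplicative ℤ →* Multiplicative ℤ := zpowersHom _ (ofAdd m)

theorem toAdd_Tm (m : ℤ) (k : Multiplicative ℤ) : toAdd (Tm m k) = m * toAdd k := by
  rw [Tm, zpowersHom_apply, toAdd_zpow]
  simp [mul_comm]

theorem Tm_inj (m : ℤ) (hm : m ≠ 0) : Function.Injective (Tm m) := by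
  intro a b hab
  have h1 := congrArg toAdd hab
  rw [toAdd_Tm, toAdd_Tm] at h1
  exact Multiplicative.toAdd.injective (mul_left_cancel₀ hm h1)

/-- The isomorphism `⟨ofAdd m⟩ ≃* ⟨ofAdd n⟩` sending `mk ↦ nk`. -/
noncomputable def phimn {m n : ℤ} (hm : m ≠ 0) (hn : n ≠ 0) :
    ((Tm m).range : Subgroup (Multiplicative ℤ)) ≃* ((Tm n).range : Subgroup (Multiplicative ℤ)) :=
  (MonoidHom.ofInjective (Tm_inj m hm)).symm.trans (MonoidHom.ofInjective (Tm_inj n hn))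

theorem pair_apply {f g : Multiplicative ℤ →* Multiplicative ℤ}
    (hf : Function.Injective f) (hg : Function.Injective g)
    (x : f.range) (k : Multiplicative ℤ) (hk : f k = ↑x) :
    ((((MonoidHom.ofInjective hf).symm.trans (MonoidHom.ofInjective hg)) x :
      g.range) : Multiplicative ℤ) = g k := by
  have h1 : (MonoidHom.ofInjective hf) k = x :=
    Subtype.ext (by rw [MonoidHom.ofInjective_apply]; exact hk)
  have h2 : (MonoidHom.ofInjective hf).symm x = k := by
    rw [← h1, MulEquiv.symm_apply_apply]
  rw [MulEquiv.trans_apply, h2, MonoidHom.ofInjective_apply]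

theorem phimn_apply {m n : ℤ} (hm : m ≠ 0) (hn : n ≠ 0) (x : (Tm m).range)
    (k : Multiplicative ℤ) (hk : Tm m k = ↑x) :
    ((phimn hm hn x : (Tm n).range) : Multiplicative ℤ) = Tm n k :=
  pair_apply (Tm_inj m hm) (Tm_inj n hn) x k hk

theorem phimn_symm_apply {m n : ℤ} (hm : m ≠ 0) (hn : n ≠ 0) (x : (Tm n).range)
    (k : Multiplicative ℤ) (hk : Tm n k = ↑x) :
    (((phimn hm hn).symm x : (Tm m).range) : Multiplicative ℤ) = Tm m k := by
  have h1 : (phimn hm hn).symm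
      = (MonoidHom.ofInjective (Tm_inj n hn)).symm.trans
        (MonoidHom.ofInjective (Tm_inj m hm)) := by
    ext z
    simp [phimn]
  rw [h1]
  exact pair_apply (Tm_inj n hn) (Tm_inj m hm) x k hk

theorem pstep_step {m n : ℤ} (hm : m ≠ 0) (hn : n ≠ 0) (x y : Multiplicative ℤ)
    (h : PStep (phimn hm hn) x y) : Step m n (toAdd x) (toAdd y) := by
  obtain ⟨u, hx, rfl⟩ := h
  rcases Int.units_eq_one_or u with rfl | rfl
  · have hxc : x ∈ (Tm m).range := hx
    obtain ⟨k, hk⟩ := hxc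
    refine ⟨toAdd k, Or.inl ⟨?_, ?_⟩⟩
    · rw [← hk, toAdd_Tm]
    · have h2 : ((HNNExtension.toSubgroupEquiv (phimn hm hn) 1 ⟨x, hx⟩ :
          (Tm n).range) : Multiplicative ℤ) = Tm n k := by
        rw [HNNExtension.toSubgroupEquiv_one]
        exact phimn_apply hm hn ⟨x, hx⟩ k hk
      rw [h2, toAdd_Tm]
  · have hxc : x ∈ (Tm n).range := hx
    obtain ⟨k, hk⟩ := hxc
    refine ⟨toAdd k, Or.inr ⟨?_, ?_⟩⟩
    · rw [← hk, toAdd_Tm]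
    · have h2 : ((HNNExtension.toSubgroupEquiv (phimn hm hn) (-1) ⟨x, hx⟩ :
          (Tm m).range) : Multiplicative ℤ) = Tm m k := by
        rw [HNNExtension.toSubgroupEquiv_neg_one]
        exact phimn_symm_apply hm hn ⟨x, hx⟩ k hk
      rw [h2, toAdd_Tm]

theorem pchain_chain {m n : ℤ} (hm : m ≠ 0) (hn : n ≠ 0) {x y : Multiplicative ℤ}
    (h : Relation.ReflTransGen (PStep (phimn hm hn)) x y) :
    Relation.ReflTransGen (Step m n) (toAdd x) (toAdd y) := by
  induction h with
  | refl => exact Relation.ReflTransGen.refl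
  | tail _ hstep ih => exact ih.tail (pstep_step hm hn _ _ hstep)

theorem ofAdd_one_zpow (m : ℤ) : (ofAdd (1 : ℤ)) ^ m = ofAdd m := by
  rw [← ofAdd_zsmul]
  simp

theorem mem_Tm_range (m : ℤ) : ofAdd m ∈ (Tm m).range := by
  refine ⟨ofAdd (1 : ℤ), ?_⟩
  apply Multiplicative.toAdd.injective
  rw [toAdd_Tm]
  simp

end BSSpec

/-! ### The two homomorphisms between `BS m n` and the HNN extension -/

section Maps
open Multiplicative

variable {m n : ℤ} (hm : m ≠ 0) (hn : n ≠ 0)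

/-- The map from `BS m n` to the HNN extension. -/
noncomputable def bsF : BS m n →*
    HNNExtension (Multiplicative ℤ) (Tm m).range (Tm n).range (phimn hm hn) :=
  PresentedGroup.toGroup (f := fun i : Fin 2 =>
    if i = 0 then HNNExtension.of (ofAdd (1 : ℤ)) else HNNExtension.t) (by
    intro r hr
    have hr' : r = FreeGroup.of 1 * FreeGroup.of 0 ^ m * (FreeGroup.of 1)⁻¹ *
        FreeGroup.of 0 ^ (-n) := hr
    subst hr'
    simp only [map_mul, map_zpow, map_inv, FreeGroup.lift_apply_of]
    norm_num
    have h1 : (HNNExtension.of (ofAdd (1 : ℤ)) :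
        HNNExtension (Multiplicative ℤ) (Tm m).range (Tm n).range (phimn hm hn)) ^ m
        = HNNExtension.of (ofAdd m) := by
      rw [← map_zpow, ofAdd_one_zpow]
    have h2 : (HNNExtension.of (ofAdd (1 : ℤ)) :
        HNNExtension (Multiplicative ℤ) (Tm m).range (Tm n).range (phimn hm hn)) ^ (n : ℤ)
        = HNNExtension.of (ofAdd n) := by
      rw [← map_zpow, ofAdd_one_zpow]
    have h4 : ((phimn hm hn ⟨ofAdd m, mem_Tm_range m⟩ : (Tm n).range) :
        Multiplicative ℤ) = ofAdd n := by
      have h5 : Tm m (ofAdd (1 : ℤ)) = ofAdd m := by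
        apply Multiplicative.toAdd.injective
        rw [toAdd_Tm]; simp
      rw [phimn_apply hm hn _ (ofAdd (1 : ℤ)) h5]
      apply Multiplicative.toAdd.injective
      rw [toAdd_Tm]; simp
    have h3 := HNNExtension.t_mul_of (φ := phimn hm hn) ⟨ofAdd m, mem_Tm_range m⟩
    rw [h4] at h3
    have h3' : (HNNExtension.t : HNNExtension (Multiplicative ℤ) (Tm m).range
        (Tm n).range (phimn hm hn)) * HNNExtension.of (ofAdd m)
        = HNNExtension.of (ofAdd n) * HNNExtension.t := h3
    have h3'' : (HNNExtension.t : HNNExtension (Multiplicative ℤ) (Tm m).range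
        (Tm n).range (phimn hm hn)) * HNNExtension.of (ofAdd m) * HNNExtension.t⁻¹
        = HNNExtension.of (ofAdd n) := by
      rw [h3']
      exact mul_inv_cancel_right _ _
    rw [h1, h2, h3'']
    simp)

theorem bsF_a : bsF hm hn (PresentedGroup.of 0) = HNNExtension.of (ofAdd (1 : ℤ)) := by
  rw [bsF, PresentedGroup.toGroup.of]
  simp

theorem bsF_t : bsF hm hn (PresentedGroup.of 1) = HNNExtension.t := by
  rw [bsF, PresentedGroup.toGroup.of]
  simp

/-- The base relation holds in `BS m n`. -/
theorem bs_rel : (PresentedGroup.of 1 : BS m n) * (PresentedGroup.of 0) ^ m *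
    (PresentedGroup.of 1)⁻¹ = (PresentedGroup.of 0) ^ n := by
  have h1 : (PresentedGroup.mk (BSRels m n)) (FreeGroup.of 1 * FreeGroup.of 0 ^ m *
      (FreeGroup.of 1)⁻¹ * FreeGroup.of 0 ^ (-n)) = 1 :=
    (QuotientGroup.eq_one_iff _).2
      (Subgroup.subset_normalClosure (show _ ∈ BSRels m n from rfl))
  rw [map_mul, map_mul, map_mul, map_zpow, map_zpow, map_inv] at h1
  have h2 : (PresentedGroup.mk (BSRels m n)) (FreeGroup.of 0) = PresentedGroup.of 0 := rfl
  have h3 : (PresentedGroup.mk (BSRels m n)) (FreeGroup.of 1) = PresentedGroup.of 1 := rfl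
  rw [h2, h3] at h1
  rw [zpow_neg] at h1
  exact mul_inv_eq_one.mp h1

/-- The map from the HNN extension back to `BS m n`. -/
noncomputable def bsJ :
    HNNExtension (Multiplicative ℤ) (Tm m).range (Tm n).range (phimn hm hn) →* BS m n :=
  HNNExtension.lift (zpowersHom (BS m n) (PresentedGroup.of 0)) (PresentedGroup.of 1) (by
    intro a
    obtain ⟨k, hk⟩ := a.2
    have hka : toAdd (a : Multiplicative ℤ) = m * toAdd k := by
      rw [← hk, toAdd_Tm]
    have hphi : toAdd ((phimn hm hn a : (Tm n).range) : Multiplicative ℤ)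
        = n * toAdd k := by
      rw [phimn_apply hm hn a k hk, toAdd_Tm]
    rw [zpowersHom_apply, zpowersHom_apply, hka, hphi]
    have hrel := bs_rel (m := m) (n := n)
    have h5 : (PresentedGroup.of 1 : BS m n) * (PresentedGroup.of 0) ^ (m * toAdd k) *
        (PresentedGroup.of 1)⁻¹ = (PresentedGroup.of 0) ^ (n * toAdd k) := by
      rw [zpow_mul, zpow_mul, ← hrel, conj_zpow]
    calc (PresentedGroup.of 1 : BS m n) * (PresentedGroup.of 0) ^ (m * toAdd k)
        = ((PresentedGroup.of 1 : BS m n) * (PresentedGroup.of 0) ^ (m * toAdd k) *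
          (PresentedGroup.of 1)⁻¹) * PresentedGroup.of 1 := by group
      _ = (PresentedGroup.of 0) ^ (n * toAdd k) * PresentedGroup.of 1 := by rw [h5])

theorem bsJ_bsF (g : BS m n) : bsJ hm hn (bsF hm hn g) = g := by
  have h1 : (bsJ hm hn).comp (bsF hm hn) = MonoidHom.id (BS m n) := by
    apply PresentedGroup.ext
    intro x
    fin_cases x
    · simp only [MonoidHom.comp_apply, MonoidHom.id_apply]
      rw [show ((⟨0, by omega⟩ : Fin 2) : Fin 2) = 0 from rfl, bsF_a, bsJ,
        HNNExtension.lift_of, zpowersHom_apply]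
      simp
    · simp only [MonoidHom.comp_apply, MonoidHom.id_apply]
      rw [show ((⟨1, by omega⟩ : Fin 2) : Fin 2) = 1 from rfl, bsF_t, bsJ,
        HNNExtension.lift_t]
  exact DFunLike.congr_fun h1 g

end Maps

end BSAux

theorem stmt_12 (m n : ℤ) (hm : m ≠ 0) (hn : n ≠ 0)
    (hmn : ¬ m ∣ n) (hnm : ¬ n ∣ m)
    (g : BS m n) (hg : g ≠ 1) :
    ∃ M : ℕ, ∀ N : ℕ, M < N → ¬ ∃ u : BS m n, u ^ N = g := by
  classical
  set F := BSAux.bsF hm hn with hF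
  have hgH : F g ≠ 1 := by
    intro h1
    apply hg
    have := BSAux.bsJ_bsF hm hn g
    rw [← this, h1, map_one]
  rcases BSAux.roots_dichotomy (BSAux.phimn hm hn) (F g) hgH with ⟨M, hM⟩ | ⟨x₀, hx₀, hroot⟩
  · refine ⟨M, fun N hN h => ?_⟩
    obtain ⟨u, hu⟩ := h
    exact hM N hN ⟨F u, by rw [← map_pow, hu]⟩
  · -- numeric bound
    obtain ⟨p, hp, hpval⟩ := BSAux.exists_bad_prime hm hn hmn
    obtain ⟨q, hq, hqval⟩ := BSAux.exists_bad_prime hn hm hnm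
    set s := Multiplicative.toAdd x₀ with hs
    have hs0 : s ≠ 0 := by simpa [hs] using hx₀
    refine ⟨s.natAbs * n.natAbs ^ (BSAux.val s p) * m.natAbs ^ (BSAux.val s q),
      fun N hN h => ?_⟩
    obtain ⟨u, hu⟩ := h
    have hNpos : 0 < N := by omega
    obtain ⟨x₁, hx₁, hchainP⟩ := hroot N hNpos (F u) (by rw [← map_pow, hu])
    have hchain := BSAux.pchain_chain hm hn hchainP
    have hstart : Multiplicative.toAdd (x₁ ^ N) = (N : ℤ) * Multiplicative.toAdd x₁ := by
      rw [toAdd_pow]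
      simp
    rw [hstart] at hchain
    have hx₁0 : Multiplicative.toAdd x₁ ≠ 0 := by simpa using hx₁
    have hdvd := BSAux.root_bound hm hn hpval hqval (by omega : N ≠ 0)
      hx₁0 hchain
    have hDpos : 0 < s.natAbs * n.natAbs ^ (BSAux.val s p) * m.natAbs ^ (BSAux.val s q) :=
      Nat.pos_of_ne_zero (Nat.mul_ne_zero (Nat.mul_ne_zero (Int.natAbs_ne_zero.2 hs0)
        (pow_ne_zero _ (Int.natAbs_ne_zero.2 hn))) (pow_ne_zero _ (Int.natAbs_ne_zero.2 hm)))
    have := Nat.le_of_dvd hDpos hdvd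
    omega
end

section
/- Let m, n ∈ ℤ∖{0}. In G = BS(m,n) the generator a has infinite order, and for every g ∈ G the subgroup ⟨a⟩ ∩ g⟨a⟩g⁻¹ has finite index in ⟨a⟩. Consequently ⟨a⟩ is a normalish subgroup of G: for every finite subset Z ⊆ G the intersection ⋂_{z∈Z} z⟨a⟩z⁻¹ is infinite. -/
/-- The conjugate `gHg⁻¹` of a subgroup `H` by an element `g`. -/
def conjSubgroup {G : Type*} [Group G] (g : G) (H : Subgroup G) : Subgroup G :=
  H.map (MulAut.conj g).toMonoidHom

/-- The generator `a` of `BS(m,n)`. -/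
def BSa (m n : ℤ) : BS m n := PresentedGroup.of 0

theorem Equiv.zpow_addRight {α : Type*} [AddGroup α] (a : α) (n : ℤ) :
    Equiv.addRight a ^ n = Equiv.addRight (n • a) := by
  induction n using Int.induction_on with
  | zero => ext; simp
  | succ k ih => ext x; simp [zpow_add_one, ih, add_zsmul, add_assoc]; rw [← succ_nsmul', succ_nsmul]
  | pred k ih => ext x; simp [zpow_sub_one, ih, sub_zsmul, sub_eq_add_neg, add_assoc]

section Aux

variable {m n : ℤ}

/-- The defining relation holds in `BS(m,n)`. -/
lemma BS_rel : (PresentedGroup.of 1 : BS m n) * BSa m n ^ m * (PresentedGroup.of 1)⁻¹ =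
    BSa m n ^ n := by
  have h : (PresentedGroup.mk (BSRels m n))
      (FreeGroup.of 1 * FreeGroup.of 0 ^ m * (FreeGroup.of 1)⁻¹ * FreeGroup.of 0 ^ (-n)) = 1 := by
    have : (FreeGroup.of 1 * FreeGroup.of 0 ^ m * (FreeGroup.of 1)⁻¹ * FreeGroup.of 0 ^ (-n)
        : FreeGroup (Fin 2)) ∈ Subgroup.normalClosure (BSRels m n) :=
      Subgroup.subset_normalClosure rfl
    exact (QuotientGroup.eq_one_iff _).mpr this
  have h2 : (PresentedGroup.of 1 : BS m n) * BSa m n ^ m * (PresentedGroup.of 1)⁻¹ *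
      BSa m n ^ (-n) = 1 := by
    simpa [BSa, PresentedGroup.of, map_mul, map_zpow, map_inv] using h
  calc (PresentedGroup.of 1 : BS m n) * BSa m n ^ m * (PresentedGroup.of 1)⁻¹
      = ((PresentedGroup.of 1 : BS m n) * BSa m n ^ m * (PresentedGroup.of 1)⁻¹ *
        BSa m n ^ (-n)) * BSa m n ^ n := by
        rw [mul_assoc ((PresentedGroup.of 1 : BS m n) * BSa m n ^ m * (PresentedGroup.of 1)⁻¹),
          ← zpow_add, neg_add_cancel, zpow_zero, mul_one]
    _ = BSa m n ^ n := by rw [h2, one_mul]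

/-- The images of the generators satisfy the defining relation in `Perm ℚ`. -/
lemma BS_lift_rels (hm : m ≠ 0) (hn : n ≠ 0) :
    ∀ r ∈ BSRels m n, (FreeGroup.lift ![Equiv.addRight (1 : ℚ),
      Equiv.mulLeft₀ ((n : ℚ)/(m : ℚ))
        (div_ne_zero (by exact_mod_cast hn) (by exact_mod_cast hm))]) r = 1 := by
  set hr : ((n : ℚ) / (m : ℚ)) ≠ 0 :=
    div_ne_zero (by exact_mod_cast hn) (by exact_mod_cast hm)
  rintro r rfl
  simp only [map_mul, map_zpow, map_inv, FreeGroup.lift_apply_of]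
  have hm' : (m : ℚ) ≠ 0 := by exact_mod_cast hm
  simp only [Matrix.cons_val_zero, Matrix.cons_val_one, Matrix.head_cons]
  have E : (Equiv.mulLeft₀ ((n : ℚ)/(m : ℚ)) hr : Equiv.Perm ℚ) *
      (Equiv.addRight (1 : ℚ)) ^ m =
      (Equiv.addRight (1 : ℚ)) ^ n * Equiv.mulLeft₀ ((n : ℚ)/(m : ℚ)) hr := by
    ext x
    simp only [Equiv.Perm.mul_apply, Equiv.zpow_addRight, zsmul_eq_mul, mul_one,
      Equiv.coe_addRight, Equiv.mulLeft₀_apply]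
    field_simp
  rw [E]
  group

/-- The homomorphism to `Perm ℚ` sending `a` to `x ↦ x + 1` and `t` to `x ↦ (n/m) x`. -/
noncomputable def BSphi (hm : m ≠ 0) (hn : n ≠ 0) : BS m n →* Equiv.Perm ℚ :=
  PresentedGroup.toGroup (BS_lift_rels hm hn)

lemma BSphi_a (hm : m ≠ 0) (hn : n ≠ 0) :
    BSphi hm hn (BSa m n) = Equiv.addRight (1 : ℚ) := by
  have h := PresentedGroup.toGroup.of (h := BS_lift_rels hm hn) (x := 0)
  simpa [BSa, BSphi] using h

lemma BS_a_inj (hm : m ≠ 0) (hn : n ≠ 0) :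
    Function.Injective fun k : ℤ => BSa m n ^ k := by
  intro k l hkl
  have : BSphi hm hn (BSa m n ^ k) = BSphi hm hn (BSa m n ^ l) := by
    simpa using congrArg (BSphi hm hn) hkl
  rw [map_zpow, map_zpow, BSphi_a hm hn, Equiv.zpow_addRight, Equiv.zpow_addRight] at this
  have h0 := congrArg (fun e : Equiv.Perm ℚ => e 0) this
  simp only [Equiv.coe_addRight, zsmul_eq_mul, mul_one, zero_add] at h0
  exact_mod_cast h0

/-- Every element conjugates some nontrivial power of `a` into a nontrivial power of `a`. -/
lemma BS_conj_pow (hm : m ≠ 0) (hn : n ≠ 0) (g : BS m n) :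
    ∃ N M : ℤ, N ≠ 0 ∧ M ≠ 0 ∧ g * BSa m n ^ N * g⁻¹ = BSa m n ^ M := by
  have hg : g ∈ Subgroup.closure (Set.range (PresentedGroup.of : Fin 2 → BS m n)) := by
    rw [PresentedGroup.closure_range_of]; trivial
  induction hg using Subgroup.closure_induction with
  | mem x hx =>
    obtain ⟨i, rfl⟩ := hx
    fin_cases i
    · exact ⟨1, 1, one_ne_zero, one_ne_zero, by
        show BSa m n * _ * (BSa m n)⁻¹ = _
        group⟩
    · exact ⟨m, n, hm, hn, BS_rel⟩
  | one => exact ⟨1, 1, one_ne_zero, one_ne_zero, by group⟩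
  | mul x y _ _ hx hy =>
    obtain ⟨N₁, M₁, hN₁, hM₁, h₁⟩ := hx
    obtain ⟨N₂, M₂, hN₂, hM₂, h₂⟩ := hy
    refine ⟨N₂ * N₁, M₁ * M₂, mul_ne_zero hN₂ hN₁, mul_ne_zero hM₁ hM₂, ?_⟩
    have e1 : y * BSa m n ^ (N₂ * N₁) * y⁻¹ = BSa m n ^ (M₂ * N₁) := by
      have := congrArg (· ^ N₁) h₂
      simpa [← conj_zpow, ← zpow_natCast, ← zpow_mul] using this
    have e2 : x * BSa m n ^ (N₁ * M₂) * x⁻¹ = BSa m n ^ (M₁ * M₂) := by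
      have := congrArg (· ^ M₂) h₁
      simpa [← conj_zpow, ← zpow_mul] using this
    calc x * y * BSa m n ^ (N₂ * N₁) * (x * y)⁻¹
        = x * (y * BSa m n ^ (N₂ * N₁) * y⁻¹) * x⁻¹ := by group
      _ = x * BSa m n ^ (N₁ * M₂) * x⁻¹ := by rw [e1, mul_comm M₂ N₁]
      _ = BSa m n ^ (M₁ * M₂) := e2
  | inv x _ hx =>
    obtain ⟨N, M, hN, hM, h⟩ := hx
    refine ⟨M, N, hM, hN, ?_⟩
    rw [← h]; group

lemma BS_zpowers_relindex (hm : m ≠ 0) (hn : n ≠ 0) {M : ℤ} (hM : M ≠ 0) :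
    (Subgroup.zpowers (BSa m n ^ M)).relIndex (Subgroup.zpowers (BSa m n)) ≠ 0 := by
  set A := Subgroup.zpowers (BSa m n)
  set H := (Subgroup.zpowers (BSa m n ^ M)).subgroupOf A
  show H.index ≠ 0
  have hMpos : (0 : ℤ) < M.natAbs := by positivity
  have hsurj : Function.Surjective
      (fun i : Fin M.natAbs => ((⟨BSa m n ^ (i : ℤ), Subgroup.zpow_mem _
        (Subgroup.mem_zpowers _) _⟩ : A) : A ⧸ H)) := by
    rintro q
    induction q using QuotientGroup.induction_on with
    | H x =>
      obtain ⟨k, hk⟩ := x.2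
      have hk' : BSa m n ^ k = (x : BS m n) := hk
      have h1 : 0 ≤ k % (M.natAbs : ℤ) :=
        Int.emod_nonneg k (by exact_mod_cast hMpos.ne')
      have h2 : k % (M.natAbs : ℤ) < (M.natAbs : ℤ) := Int.emod_lt_of_pos k hMpos
      set r : ℕ := (k % (M.natAbs : ℤ)).toNat with hrdef
      have hr' : (r : ℤ) = k % (M.natAbs : ℤ) := Int.toNat_of_nonneg h1
      have hrlt : r < M.natAbs := by omega
      refine ⟨⟨r, hrlt⟩, ?_⟩
      apply (QuotientGroup.eq ..).mpr
      rw [Subgroup.mem_subgroupOf]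
      show (BSa m n ^ ((r : ℤ)))⁻¹ * (x : BS m n) ∈ Subgroup.zpowers (BSa m n ^ M)
      rw [← hk', ← zpow_neg, ← zpow_add]
      have hdvd : M ∣ -(r : ℤ) + k := by
        have hA : (M.natAbs : ℤ) ∣ k - k % (M.natAbs : ℤ) := Int.dvd_self_sub_of_emod_eq rfl
        have hB : (M.natAbs : ℤ) ∣ -(r : ℤ) + k := by
          have heq : -(r : ℤ) + k = k - k % (M.natAbs : ℤ) := by omega
          rw [heq]; exact hA
        exact Int.natAbs_dvd.mp hB
      obtain ⟨c, hc⟩ := hdvd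
      exact ⟨c, by show (BSa m n ^ M) ^ c = BSa m n ^ (-(r : ℤ) + k)
                   rw [← zpow_mul, ← hc]⟩
  have : Finite (A ⧸ H) := Finite.of_surjective _ hsurj
  exact Subgroup.index_ne_zero_of_finite

lemma BS_zpow_mem_conj (hm : m ≠ 0) (hn : n ≠ 0) (g : BS m n) {N M : ℤ}
    (h : g * BSa m n ^ N * g⁻¹ = BSa m n ^ M) :
    Subgroup.zpowers (BSa m n ^ M) ≤ conjSubgroup g (Subgroup.zpowers (BSa m n)) := by
  rw [Subgroup.zpowers_le]
  refine ⟨BSa m n ^ N, Subgroup.zpow_mem _ (Subgroup.mem_zpowers _) _, ?_⟩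
  simpa [MulAut.conj_apply] using h

end Aux

theorem stmt_13 (m n : ℤ) (hm : m ≠ 0) (hn : n ≠ 0) :
    -- `a` has infinite order
    (Function.Injective fun k : ℤ => BSa m n ^ k) ∧
    -- `⟨a⟩ ∩ g⟨a⟩g⁻¹` has finite index in `⟨a⟩` for every `g`
    (∀ g : BS m n,
      (conjSubgroup g (Subgroup.zpowers (BSa m n))).relIndex
        (Subgroup.zpowers (BSa m n)) ≠ 0) ∧
    -- consequently `⟨a⟩` is normalish
    (∀ Z : Finset (BS m n),
      (⋂ z ∈ Z, ((conjSubgroup z (Subgroup.zpowers (BSa m n)) : Subgroup (BS m n)) :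
        Set (BS m n))).Infinite) := by
  refine ⟨BS_a_inj hm hn, ?_, ?_⟩
  · intro g
    obtain ⟨N, M, hN, hM, h⟩ := BS_conj_pow hm hn g
    intro h0
    exact BS_zpowers_relindex hm hn hM
      (Nat.eq_zero_of_zero_dvd (h0 ▸ Subgroup.relIndex_dvd_of_le_left _
        (BS_zpow_mem_conj hm hn g h)))
  · intro Z
    choose N M hN hM hconj using BS_conj_pow hm hn
    set K : ℤ := ∏ z ∈ Z, M z with hK
    have hKne : K ≠ 0 := Finset.prod_ne_zero_iff.mpr fun z _ => hM z
    apply Set.infinite_of_injective_forall_mem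
      (f := fun j : ℤ => BSa m n ^ (K * j))
    · intro i j hij
      have := BS_a_inj hm hn hij
      exact mul_left_cancel₀ hKne this
    · intro j
      rw [Set.mem_iInter₂]
      intro z hz
      obtain ⟨c, hc⟩ := Finset.dvd_prod_of_mem M hz
      show BSa m n ^ (K * j) ∈ conjSubgroup z (Subgroup.zpowers (BSa m n))
      apply BS_zpow_mem_conj hm hn z (hconj z)
      rw [show K * j = M z * (c * j) by rw [hK, hc]; ring, zpow_mul]
      exact Subgroup.zpow_mem _ (Subgroup.mem_zpowers _) _
end

section
/- Let G be a countable group and let FC(G) be its FC-center. For every finite subset Q ⊆ FC(G) and every subgroup K of FC(G), the orbit under G of the set U = {H : H is a subgroup of FC(G) and Q ∩ H = Q ∩ K} is finite; that is, the family of sets {g·U : g ∈ G}, where g·U = {gHg⁻¹ : H ∈ U}, contains only finitely many distinct sets. -/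
/-- The FC-center of `G`, as a set: the elements of `G` with finite conjugacy class. -/
def FCCenter (G : Type*) [Group G] : Set G :=
  {g : G | {h : G | ∃ x : G, x * g * x⁻¹ = h}.Finite}

lemma mem_conjSubgroup {G : Type*} [Group G] {g x : G} {H : Subgroup G} :
    x ∈ conjSubgroup g H ↔ g⁻¹ * x * g ∈ H := by
  simp only [conjSubgroup, Subgroup.mem_map, MulEquiv.coe_toMonoidHom, MulAut.conj_apply]
  constructor
  · rintro ⟨h, hh, rfl⟩
    simpa [mul_assoc] using hh
  · intro h
    exact ⟨g⁻¹ * x * g, h, by group⟩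

lemma fc_conj {G : Type*} [Group G] {a : G} (ha : a ∈ FCCenter G) (g : G) :
    g * a * g⁻¹ ∈ FCCenter G := by
  have h : {h : G | ∃ x : G, x * (g * a * g⁻¹) * x⁻¹ = h}
      = {h : G | ∃ x : G, x * a * x⁻¹ = h} := by
    ext h
    constructor
    · rintro ⟨x, rfl⟩; exact ⟨x * g, by group⟩
    · rintro ⟨x, rfl⟩; exact ⟨x * g⁻¹, by group⟩
  show Set.Finite _
  rw [h]; exact ha

theorem stmt_14 {G : Type*} [Group G] [Countable G]
    (Q : Finset G) (hQ : (Q : Set G) ⊆ FCCenter G)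
    (K : Subgroup G) (hK : (K : Set G) ⊆ FCCenter G) :
    {V : Set (Subgroup G) | ∃ g : G,
        V = (conjSubgroup g) ''
          {H : Subgroup G | (H : Set G) ⊆ FCCenter G ∧
            (Q : Set G) ∩ H = (Q : Set G) ∩ K}}.Finite := by
  classical
  -- the map recording the conjugate of each element of Q
  set Φ : G → (Q → G) := fun g q => g * (q : G) * g⁻¹ with hΦ
  -- the range of Φ is finite since each element of Q has finite conjugacy class
  have hrange : (Set.range Φ).Finite := by
    have hsub : Set.range Φ ⊆ Set.pi Set.univ
        (fun q : Q => {h : G | ∃ x : G, x * (q : G) * x⁻¹ = h}) := by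
      rintro f ⟨g, rfl⟩ q _
      exact ⟨g, rfl⟩
    exact (Set.Finite.pi (fun q : Q => hQ q.2)).subset hsub
  -- the orbit sets are determined by Φ
  set F : (Q → G) → Set (Subgroup G) := fun f =>
    {H' : Subgroup G | (H' : Set G) ⊆ FCCenter G ∧
      ∀ q : Q, (f q ∈ H' ↔ (q : G) ∈ K)} with hF
  have key : ∀ g : G,
      (conjSubgroup g) '' {H : Subgroup G | (H : Set G) ⊆ FCCenter G ∧
        (Q : Set G) ∩ H = (Q : Set G) ∩ K} = F (Φ g) := by
    intro g
    ext H'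
    constructor
    · rintro ⟨H, ⟨hHfc, hHK⟩, rfl⟩
      refine ⟨?_, ?_⟩
      · intro x hx
        rw [SetLike.mem_coe, mem_conjSubgroup] at hx
        have := fc_conj (hHfc hx) g
        simpa [mul_assoc] using this
      · intro q
        have hq : ((q : G) ∈ (Q : Set G) ∩ H) ↔ ((q : G) ∈ (Q : Set G) ∩ K) := by
          rw [hHK]
        simp only [Set.mem_inter_iff, Finset.mem_coe, q.2, true_and] at hq
        rw [SetLike.mem_coe, mem_conjSubgroup] at *
        constructor
        · intro h
          have : (q : G) ∈ H := by
            have := h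
            simpa [hΦ, mul_assoc] using this
          exact hq.1 this
        · intro h
          have : (q : G) ∈ H := hq.2 h
          show g⁻¹ * (g * (q : G) * g⁻¹) * g ∈ H
          simpa [hΦ, mul_assoc] using this
    · rintro ⟨hfc, hqk⟩
      refine ⟨conjSubgroup g⁻¹ H', ⟨?_, ?_⟩, ?_⟩
      · intro x hx
        rw [SetLike.mem_coe, mem_conjSubgroup] at hx
        have := fc_conj (hfc hx) g⁻¹
        simpa [hΦ, mul_assoc] using this
      · ext x
        simp only [Set.mem_inter_iff, Finset.mem_coe, SetLike.mem_coe]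
        constructor
        · rintro ⟨hxQ, hxH⟩
          refine ⟨hxQ, ?_⟩
          rw [mem_conjSubgroup] at hxH
          have h1 := (hqk ⟨x, hxQ⟩).1
          apply h1
          simpa [hΦ, mul_assoc] using hxH
        · rintro ⟨hxQ, hxK⟩
          refine ⟨hxQ, ?_⟩
          rw [mem_conjSubgroup]
          have h2 := (hqk ⟨x, hxQ⟩).2 hxK
          simpa [hΦ, mul_assoc] using h2
      · ext x
        rw [mem_conjSubgroup, mem_conjSubgroup]
        constructor
        · intro h; simpa [mul_assoc] using h
        · intro h
          show g⁻¹⁻¹ * (g⁻¹ * x * g) * g⁻¹ ∈ H'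
          simpa [mul_assoc] using h
  -- conclude
  have hsub : {V : Set (Subgroup G) | ∃ g : G,
      V = (conjSubgroup g) '' {H : Subgroup G | (H : Set G) ⊆ FCCenter G ∧
        (Q : Set G) ∩ H = (Q : Set G) ∩ K}} ⊆ F '' (Set.range Φ) := by
    rintro V ⟨g, rfl⟩
    exact ⟨Φ g, ⟨g, rfl⟩, (key g).symm⟩
  exact (hrange.image F).subset hsub
end

section
/- Let G be a countable group, let (H_n)_{n≥0} be a sequence of amenable subgroups of G, and let K be a subgroup of G such that (H_n) converges to K in the Chabauty topology. Then K is amenable. -/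
private lemma relMean_mono {G : Type*} [Group G] {m : Set G → ℝ}
    (h0 : ∀ s : Set G, 0 ≤ m s)
    (h2 : ∀ s t : Set G, Disjoint s t → m (s ∪ t) = m s + m t)
    {s t : Set G} (hst : s ⊆ t) : m s ≤ m t := by
  have h := h2 s (t \ s) Set.disjoint_sdiff_right
  rw [Set.union_diff_cancel hst] at h
  have := h0 (t \ s)
  linarith

private lemma relMean_of_isAmenable {G : Type*} [Group G] (L : Subgroup G)
    (h : IsAmenable ↥L) :
    ∃ m : Set G → ℝ,
      (∀ s : Set G, 0 ≤ m s) ∧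
      m ↑L = 1 ∧
      (∀ s t : Set G, Disjoint s t → m (s ∪ t) = m s + m t) ∧
      (∀ g ∈ L, ∀ s : Set G, m ((g * ·) '' s) = m s) := by
  obtain ⟨μ, h0, h1, h2, h3⟩ := h
  refine ⟨fun s => μ (Subtype.val ⁻¹' s), fun s => h0 _, ?_, ?_, ?_⟩
  · show μ (Subtype.val ⁻¹' (L : Set G)) = 1
    have : (Subtype.val ⁻¹' (L : Set G) : Set ↥L) = Set.univ := by
      ext x; simp [x.2]
    rw [this, h1]
  · intro s t hst
    show μ (Subtype.val ⁻¹' (s ∪ t)) = μ (Subtype.val ⁻¹' s) + μ (Subtype.val ⁻¹' t)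
    rw [Set.preimage_union]
    exact h2 _ _ (hst.preimage _)
  · intro g hg s
    have key : (Subtype.val ⁻¹' ((g * ·) '' s) : Set ↥L)
        = ((⟨g, hg⟩ : L) * ·) '' (Subtype.val ⁻¹' s) := by
      rw [Set.image_mul_left, Set.image_mul_left]
      ext x
      simp [Set.mem_preimage]
    show μ (Subtype.val ⁻¹' ((g * ·) '' s)) = μ (Subtype.val ⁻¹' s)
    rw [key, h3]

private lemma relMean_of_le {G : Type*} [Group G] {L H : Subgroup G} (hLH : L ≤ H)
    (hm : ∃ m : Set G → ℝ,
      (∀ s : Set G, 0 ≤ m s) ∧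
      m ↑H = 1 ∧
      (∀ s t : Set G, Disjoint s t → m (s ∪ t) = m s + m t) ∧
      (∀ g ∈ H, ∀ s : Set G, m ((g * ·) '' s) = m s)) :
    ∃ m : Set G → ℝ,
      (∀ s : Set G, 0 ≤ m s) ∧
      m ↑L = 1 ∧
      (∀ s t : Set G, Disjoint s t → m (s ∪ t) = m s + m t) ∧
      (∀ g ∈ L, ∀ s : Set G, m ((g * ·) '' s) = m s) := by
  obtain ⟨m, h0, h1, h2, h3⟩ := hm
  -- a transversal for the right cosets of `L`
  set rep : G → G := fun h => (Quotient.mk (QuotientGroup.rightRel L) h).out with hrepdef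
  set ρ : G → G := fun h => h * (rep h)⁻¹ with hρdef
  have hρL : ∀ h : G, ρ h ∈ L := by
    intro h
    have := Quotient.mk_out (s := QuotientGroup.rightRel L) h
    rw [QuotientGroup.rightRel_apply] at this
    exact this
  have hrepmul : ∀ g ∈ L, ∀ h : G, rep (g * h) = rep h := by
    intro g hg h
    have : (Quotient.mk (QuotientGroup.rightRel L) (g * h))
        = Quotient.mk (QuotientGroup.rightRel L) h := by
      apply Quotient.sound
      have hrel : h * (g * h)⁻¹ ∈ L := by
        have : h * (g * h)⁻¹ = g⁻¹ := by group
        rw [this]; exact L.inv_mem hg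
      exact QuotientGroup.rightRel_apply.mpr hrel
    simp only [hrepdef, this]
  have hρmul : ∀ g ∈ L, ∀ h : G, ρ (g * h) = g * ρ h := by
    intro g hg h
    simp only [hρdef, hrepmul g hg h, mul_assoc]
  refine ⟨fun s => m (ρ ⁻¹' s ∩ ↑H), fun s => h0 _, ?_, ?_, ?_⟩
  · show m (ρ ⁻¹' (L : Set G) ∩ ↑H) = 1
    have : ρ ⁻¹' (L : Set G) ∩ ↑H = ↑H := by
      rw [Set.inter_eq_self_of_subset_right]
      intro h _
      exact hρL h
    rw [this, h1]
  · intro s t hst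
    show m (ρ ⁻¹' (s ∪ t) ∩ ↑H) = m (ρ ⁻¹' s ∩ ↑H) + m (ρ ⁻¹' t ∩ ↑H)
    have : ρ ⁻¹' (s ∪ t) ∩ ↑H = (ρ ⁻¹' s ∩ ↑H) ∪ (ρ ⁻¹' t ∩ ↑H) := by
      rw [Set.preimage_union, Set.union_inter_distrib_right]
    rw [this]
    exact h2 _ _ (((hst.preimage ρ).inter_left _).inter_right _)
  · intro g hg s
    have key : ρ ⁻¹' ((g * ·) '' s) ∩ ↑H = (g * ·) '' (ρ ⁻¹' s ∩ ↑H) := by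
      rw [Set.image_mul_left, Set.image_mul_left]
      ext h
      simp only [Set.mem_inter_iff, Set.mem_preimage, SetLike.mem_coe]
      rw [← hρmul g⁻¹ (L.inv_mem hg) h]
      constructor
      · rintro ⟨hs, hH⟩
        exact ⟨hs, H.mul_mem (H.inv_mem (hLH hg)) hH⟩
      · rintro ⟨hs, hH⟩
        refine ⟨hs, ?_⟩
        have hh : h = g * (g⁻¹ * h) := by group
        rw [hh]
        exact H.mul_mem (hLH hg) hH
    show m (ρ ⁻¹' ((g * ·) '' s) ∩ ↑H) = m (ρ ⁻¹' s ∩ ↑H)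
    rw [key, h3 g (hLH hg)]

theorem stmt_15 {G : Type*} [Group G] [Countable G]
    (H : ℕ → Subgroup G) (hH : ∀ n, IsAmenable (H n))
    (K : Subgroup G)
    (hconv : ∀ g : G, ∀ᶠ n in Filter.atTop, (g ∈ H n ↔ g ∈ K)) :
    IsAmenable K := by
  classical
  have : Nonempty G := ⟨1⟩
  obtain ⟨e, he⟩ := exists_surjective_nat G
  -- increasing exhaustion of K by finitely generated subgroups
  set S : ℕ → Set G := fun j => {g | g ∈ K ∧ ∃ i ≤ j, e i = g} with hSdef
  set L : ℕ → Subgroup G := fun j => Subgroup.closure (S j) with hLdef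
  have hSK : ∀ j, S j ⊆ ↑K := fun j g hg => hg.1
  have hLK : ∀ j, L j ≤ K := fun j => (Subgroup.closure_le K).2 (hSK j)
  have hmono : Monotone L := by
    intro i j hij
    apply Subgroup.closure_mono
    rintro g ⟨hgK, k, hk, rfl⟩
    exact ⟨hgK, k, hk.trans hij, rfl⟩
  have hmem : ∀ g ∈ K, ∀ᶠ j in Filter.atTop, g ∈ L j := by
    intro g hg
    obtain ⟨i, rfl⟩ := he g
    rw [Filter.eventually_atTop]
    exact ⟨i, fun j hj => hmono hj (Subgroup.subset_closure ⟨hg, i, le_refl i, rfl⟩)⟩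
  -- each L j admits a relative invariant mean
  have hrel : ∀ j, ∃ m : Set G → ℝ,
      (∀ s : Set G, 0 ≤ m s) ∧
      m ↑(L j) = 1 ∧
      (∀ s t : Set G, Disjoint s t → m (s ∪ t) = m s + m t) ∧
      (∀ g ∈ L j, ∀ s : Set G, m ((g * ·) '' s) = m s) := by
    intro j
    have hev : ∀ᶠ n in Filter.atTop, ∀ i ∈ Finset.Iic j, (e i ∈ K → e i ∈ H n) := by
      rw [Filter.eventually_all_finset]
      intro i _
      filter_upwards [hconv (e i)] with n hn hK
      exact hn.2 hK
    obtain ⟨n, hn⟩ := hev.exists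
    have hLH : L j ≤ H n := by
      apply (Subgroup.closure_le (H n)).2
      rintro g ⟨hgK, i, hij, rfl⟩
      exact hn i (Finset.mem_Iic.2 hij) hgK
    exact relMean_of_le hLH (relMean_of_isAmenable (H n) (hH n))
  choose m h0 h1 h2 h3 using hrel
  -- the approximating means on subsets of K
  set ψ : ℕ → Set ↥K → ℝ := fun j A => m j (Subtype.val '' A ∩ ↑(L j)) with hψdef
  have hψ01 : ∀ j A, ψ j A ∈ Set.Icc (0 : ℝ) 1 := by
    intro j A
    refine ⟨h0 j _, ?_⟩
    rw [← h1 j]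
    exact relMean_mono (h0 j) (h2 j) Set.inter_subset_right
  -- ultrafilter limit
  set u : Ultrafilter ℕ := Ultrafilter.of Filter.atTop with hudef
  have hule : ↑u ≤ (Filter.atTop : Filter ℕ) := Ultrafilter.of_le _
  have hM : ∀ A : Set ↥K, ∃ a : ℝ, Filter.Tendsto (fun j => ψ j A) u (nhds a) := by
    intro A
    have hle : ↑(u.map (fun j => ψ j A)) ≤ Filter.principal (Set.Icc (0 : ℝ) 1) := by
      rw [Filter.le_principal_iff]
      exact Filter.mem_map.2 (Filter.univ_mem' fun j => hψ01 j A)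
    obtain ⟨a, _, ha⟩ := isCompact_Icc.ultrafilter_le_nhds _ hle
    exact ⟨a, ha⟩
  choose M hM using hM
  refine ⟨M, ?_, ?_, ?_, ?_⟩
  · intro A
    exact ge_of_tendsto' (hM A) fun j => (hψ01 j A).1
  · have : (fun j => ψ j Set.univ) = fun _ => (1 : ℝ) := by
      funext j
      have : (Subtype.val '' (Set.univ : Set ↥K)) ∩ ↑(L j) = ↑(L j) := by
        rw [Subtype.coe_image_univ]
        exact Set.inter_eq_self_of_subset_right (hLK j)
      simp only [hψdef, this, h1 j]
    exact tendsto_nhds_unique (hM Set.univ) (by rw [this]; exact tendsto_const_nhds)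
  · intro A B hAB
    have key : ∀ j, ψ j (A ∪ B) = ψ j A + ψ j B := by
      intro j
      have himg : Subtype.val '' (A ∪ B) ∩ ↑(L j)
          = (Subtype.val '' A ∩ ↑(L j)) ∪ (Subtype.val '' B ∩ ↑(L j)) := by
        rw [Set.image_union, Set.union_inter_distrib_right]
      have hdisj : Disjoint (Subtype.val '' A ∩ ↑(L j)) (Subtype.val '' B ∩ ↑(L j)) := by
        have : Disjoint (Subtype.val '' A) (Subtype.val '' B) :=
          (Set.disjoint_image_iff Subtype.val_injective).2 hAB
        exact (this.inter_left _).inter_right _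
      simp only [hψdef, himg, h2 j _ _ hdisj]
    have h1' : Filter.Tendsto (fun j => ψ j (A ∪ B)) u (nhds (M A + M B)) :=
      ((hM A).add (hM B)).congr fun j => (key j).symm
    exact tendsto_nhds_unique (hM (A ∪ B)) h1'
  · intro g A
    have hev : ∀ᶠ j in Filter.atTop, ψ j ((g * ·) '' A) = ψ j A := by
      filter_upwards [hmem ↑g g.2] with j hj
      have himg : Subtype.val '' ((g * ·) '' A) = ((↑g : G) * ·) '' (Subtype.val '' A) := by
        rw [Set.image_image, Set.image_image]
        simp only [Subgroup.coe_mul]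
      have hint : (((↑g : G) * ·) '' (Subtype.val '' A)) ∩ ↑(L j)
          = ((↑g : G) * ·) '' (Subtype.val '' A ∩ ↑(L j)) := by
        rw [Set.image_mul_left, Set.image_mul_left]
        ext x
        simp only [Set.mem_inter_iff, Set.mem_preimage, SetLike.mem_coe]
        constructor
        · rintro ⟨hs, hx⟩
          exact ⟨hs, (L j).mul_mem ((L j).inv_mem hj) hx⟩
        · rintro ⟨hs, hx⟩
          refine ⟨hs, ?_⟩
          have hh : x = ↑g * ((↑g)⁻¹ * x) := by group
          rw [hh]
          exact (L j).mul_mem hj hx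
      simp only [hψdef, himg, hint, h3 j (↑g) hj]
    have hev' : (fun j => ψ j ((g * ·) '' A)) =ᶠ[↑u] fun j => ψ j A :=
      hev.filter_mono hule
    exact tendsto_nhds_unique (hM ((g * ·) '' A)) (Filter.Tendsto.congr' hev'.symm (hM A))
end
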